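/- arXiv:math/0405259 — 7 statements merged into one kernel-verified Lean document; each statement's English description precedes it below -/
import Mathlib

section
/- Let n ≥ 1 and let p_1,…,p_n be positive integers. Define V = {x ∈ (ℂ∖{0})^n : there exists ξ ∈ ℂ^n with ξ_i^{p_i} = x_i for every i = 1,…,n and ξ_1 + ⋯ + ξ_n = 1}. Then the complement ℝ^n ∖ Log(V) has exactly n + 1 connected components. -/
/-!
Writing `x i = ξ i ^ p i` and `u i = v i / p i`, a point `v` lies in `Log V` iff some `ξ` with
`‖ξ i‖ = exp (u i)` has `∑ ξ i = 1`, i.e. iff `1, exp (u 1), …, exp (u n)` are the side lengths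
of a closed polygon in `ℂ`: no side exceeds the sum of the others. So the complement
of the amoeba is the disjoint union of the open sets `{∑ exp (u j) < 1}` and
`{1 + ∑ exp (u j) < 2 exp (u i)}`. Each of them is convex, being (after dividing by `exp (u i)`)
a sublevel set of a sum of exponentials of linear forms, so these are the `n + 1` components.
-/

open Set Function Real

theorem isClopen_of_pairwise_disjoint_of_iUnion_eq_univ {α κ : Type*} [TopologicalSpace α]
    {U : κ → Set α} (hopen : ∀ k, IsOpen (U k)) (hdisj : Pairwise (Disjoint on U))
    (hunion : ⋃ k, U k = univ) (k : κ) : IsClopen (U k) := by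
  have hcompl : (U k)ᶜ = ⋃ (j) (_ : j ≠ k), U j := by
    ext x
    obtain ⟨j, hj⟩ := mem_iUnion.1 (hunion.symm ▸ mem_univ x : x ∈ ⋃ k, U k)
    simp only [mem_compl_iff, mem_iUnion, exists_prop]
    refine ⟨fun hx => ⟨j, fun h => hx (h ▸ hj), hj⟩, ?_⟩
    rintro ⟨j, hjk, hj⟩ hk
    exact disjoint_left.1 (hdisj hjk) hj hk
  exact ⟨by rw [← isOpen_compl_iff, hcompl]; exact isOpen_biUnion fun j _ => hopen j, hopen k⟩

theorem nat_card_connectedComponents_eq_of_iUnion_eq {α κ : Type*} [TopologicalSpace α]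
    {s : Set α} {U : κ → Set α} (hopen : ∀ k, IsOpen (U k)) (hconn : ∀ k, IsConnected (U k))
    (hdisj : Pairwise (Disjoint on U)) (hunion : ⋃ k, U k = s) :
    Nat.card (ConnectedComponents s) = Nat.card κ := by
  let W : κ → Set s := fun k => (↑) ⁻¹' U k
  have hWopen : ∀ k, IsOpen (W k) := fun k => (hopen k).preimage continuous_subtype_val
  have hWdisj : Pairwise (Disjoint on W) := fun j k hjk => (hdisj hjk).preimage _
  have hWunion : ⋃ k, W k = univ := by simp [W, ← preimage_iUnion, hunion]
  have hWconn : ∀ k, IsConnected (W k) := by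
    intro k
    have himage : (↑) '' W k = U k := by
      rw [Subtype.image_preimage_coe, inter_eq_right.2 (hunion ▸ subset_iUnion U k)]
    rw [IsConnected, ← image_nonempty, ← Topology.IsInducing.subtypeVal.isPreconnected_image,
      himage]
    exact hconn k
  exact Nat.card_congr (ConnectedComponents.equivOfIsClopenOfIsConnected
    (isClopen_of_pairwise_disjoint_of_iUnion_eq_univ hWopen hWdisj hWunion) hWdisj hWunion hWconn)

theorem nat_card_connectedComponents_congr {X Y : Type*} [TopologicalSpace X]
    [TopologicalSpace Y] (e : X ≃ₜ Y) :
    Nat.card (ConnectedComponents X) = Nat.card (ConnectedComponents Y) :=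
  Nat.card_congr (e.isQuotientMap.isCoinducing.connectedComponentsHomeomorph fun y => by
    simpa [← e.image_symm, image_singleton] using isConnected_singleton).toEquiv

theorem Complex.exists_norm_eq_and_norm_sub_eq {a b : ℝ} {w : ℂ} (h₁ : |a - b| ≤ ‖w‖)
    (h₂ : ‖w‖ ≤ a + b) : ∃ x : ℂ, ‖x‖ = a ∧ ‖w - x‖ = b := by
  have ha : 0 ≤ a := by linarith [neg_abs_le (a - b), abs_nonneg (a - b)]
  obtain ⟨h₁', h₁''⟩ := abs_sub_le_iff.1 h₁
  -- as `θ` runs over `[0, π]`, the distance from `‖w‖` to `a * exp (θ * I)` sweeps out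
  -- `[|‖w‖ - a|, ‖w‖ + a]`; then rotate by `arg w`
  let g : ℝ → ℝ := fun θ => ‖(‖w‖ : ℂ) - a * Complex.exp (θ * Complex.I)‖
  have hg : Continuous g := by fun_prop
  have hb : b ∈ Icc (g 0) (g π) := by
    have hg0 : g 0 = |‖w‖ - a| := by simp [g, ← Complex.ofReal_sub, Complex.norm_real]
    have hgπ : g π = ‖w‖ + a := by
      simp only [g, Complex.exp_pi_mul_I, mul_neg_one, sub_neg_eq_add, ← Complex.ofReal_add,
        Complex.norm_real, Real.norm_of_nonneg (by positivity : 0 ≤ ‖w‖ + a)]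
    rw [hg0, hgπ]
    exact ⟨abs_sub_le_iff.2 ⟨by linarith, by linarith⟩, by linarith⟩
  obtain ⟨θ, -, hθ⟩ := intermediate_value_Icc pi_pos.le hg.continuousOn hb
  refine ⟨a * Complex.exp (θ * Complex.I) * Complex.exp (w.arg * Complex.I), ?_, ?_⟩
  · simp [Complex.norm_exp_ofReal_mul_I, abs_of_nonneg ha]
  · nth_rewrite 1 [← Complex.norm_mul_exp_arg_mul_I w]
    rw [← sub_mul, norm_mul, Complex.norm_exp_ofReal_mul_I, mul_one]
    exact hθ

theorem Complex.exists_norm_eq_and_sum_eq {ι : Type*} (s : Finset ι) {r : ι → ℝ}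
    (hr : ∀ i, 0 ≤ r i) {w : ℂ} (hw : ‖w‖ ≤ ∑ i ∈ s, r i)
    (hr_le : ∀ i ∈ s, 2 * r i ≤ ‖w‖ + ∑ j ∈ s, r j) :
    ∃ ξ : ι → ℂ, (∀ i ∈ s, ‖ξ i‖ = r i) ∧ ∑ i ∈ s, ξ i = w := by
  classical
  induction s using Finset.induction_on generalizing w with
  | empty => exact ⟨0, by simp, by simpa [eq_comm] using hw⟩
  | insert a s ha ih =>
    rw [Finset.sum_insert ha] at hw hr_le
    set T := ∑ j ∈ s, r j
    have hT : ∀ i ∈ s, r i ≤ T := fun i hi => Finset.single_le_sum (fun j _ => hr j) hi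
    have hra := hr_le a (Finset.mem_insert_self a s)
    -- cut off the side `x` by the diagonal `w - x` of length `t`, the longest one that the
    -- remaining sides can still close up
    set t := min T (‖w‖ + r a)
    have ht : t = T ∨ t = ‖w‖ + r a := min_choice _ _
    have ht_le : t ≤ T ∧ t ≤ ‖w‖ + r a := le_min_iff.1 le_rfl
    have ht_ge : ‖w‖ - r a ≤ t ∧ r a - ‖w‖ ≤ t := by
      refine ⟨le_min ?_ ?_, le_min ?_ ?_⟩ <;> linarith [norm_nonneg w, hr a]
    obtain ⟨x, hx, hwx⟩ := exists_norm_eq_and_norm_sub_eq (a := r a) (b := t) (w := w)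
      (abs_sub_le_iff.2 ⟨by linarith, by linarith⟩) (by linarith)
    obtain ⟨ξ, hξ, hξsum⟩ := ih (w := w - x) (hwx ▸ ht_le.1) fun i hi => by
      rcases ht with h | h <;> rw [hwx, h]
      · linarith [hT i hi]
      · linarith [hr_le i (Finset.mem_insert_of_mem hi)]
    refine ⟨update ξ a x, fun i hi => ?_, ?_⟩
    · rcases Finset.mem_insert.1 hi with rfl | hi
      · simpa using hx
      · rw [update_of_ne (ne_of_mem_of_not_mem hi ha)]; exact hξ i hi
    · rw [Finset.sum_insert ha, update_self, Finset.sum_update_of_notMem ha, hξsum]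
      ring

theorem Complex.exists_norm_eq_and_sum_eq_iff {ι : Type*} [Fintype ι] {r : ι → ℝ}
    (hr : ∀ i, 0 ≤ r i) (w : ℂ) :
    (∃ ξ : ι → ℂ, (∀ i, ‖ξ i‖ = r i) ∧ ∑ i, ξ i = w) ↔
      ‖w‖ ≤ ∑ i, r i ∧ ∀ i, 2 * r i ≤ ‖w‖ + ∑ j, r j := by
  classical
  constructor
  · rintro ⟨ξ, hξ, rfl⟩
    have hnorm : ∀ s : Finset ι, ∑ i ∈ s, ‖ξ i‖ = ∑ i ∈ s, r i :=
      fun s => Finset.sum_congr rfl fun i _ => hξ i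
    refine ⟨hnorm _ ▸ norm_sum_le _ _, fun i => ?_⟩
    have hξi : ξ i = ∑ j, ξ j - ∑ j ∈ Finset.univ.erase i, ξ j := by
      rw [← Finset.add_sum_erase _ _ (Finset.mem_univ i), add_sub_cancel_right]
    have hle : r i ≤ ‖∑ j, ξ j‖ + ∑ j ∈ Finset.univ.erase i, r j := by
      rw [← hξ i, hξi, ← hnorm]
      exact (norm_sub_le _ _).trans (add_le_add le_rfl (norm_sum_le _ _))
    linarith [Finset.add_sum_erase _ r (Finset.mem_univ i)]
  · rintro ⟨hw, hr_le⟩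
    obtain ⟨ξ, hξ, hsum⟩ := exists_norm_eq_and_sum_eq Finset.univ hr hw fun i _ => hr_le i
    exact ⟨ξ, fun i => hξ i (Finset.mem_univ i), hsum⟩

theorem convexOn_sum_exp_linearMap {E κ : Type*} [AddCommGroup E] [Module ℝ E] (s : Finset κ)
    (ℓ : κ → E →ₗ[ℝ] ℝ) : ConvexOn ℝ univ fun x => ∑ k ∈ s, exp (ℓ k x) := by
  refine ⟨convex_univ, fun x _ y _ a b ha hb hab => ?_⟩
  simp only [smul_eq_mul, Finset.mul_sum, ← Finset.sum_add_distrib, map_add, map_smul]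
  exact Finset.sum_le_sum fun k _ => convexOn_exp.2 (mem_univ _) (mem_univ _) ha hb hab

/-- The amoeba of the hyperplane `∑ ξ i = 1`, in the coordinates `u i = log ‖ξ i‖`. -/
def hyperplaneAmoeba (ι : Type*) [Fintype ι] : Set (ι → ℝ) :=
  {u | ∃ ξ : ι → ℂ, (∀ i, ‖ξ i‖ = exp (u i)) ∧ ∑ i, ξ i = 1}

theorem mem_hyperplaneAmoeba_iff {ι : Type*} [Fintype ι] {u : ι → ℝ} :
    u ∈ hyperplaneAmoeba ι ↔ 1 ≤ ∑ i, exp (u i) ∧ ∀ i, 2 * exp (u i) ≤ 1 + ∑ j, exp (u j) := by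
  rw [hyperplaneAmoeba, mem_ofPred_eq,
    Complex.exists_norm_eq_and_sum_eq_iff (fun i => (exp_pos (u i)).le), norm_one]

namespace hyperplaneAmoeba

variable {ι : Type*} [Fintype ι]

def complComponent : Option ι → Set (ι → ℝ)
  | none => {u | ∑ i, exp (u i) < 1}
  | some i => {u | 1 + ∑ j, exp (u j) < 2 * exp (u i)}

theorem isOpen_complComponent (k : Option ι) : IsOpen (complComponent k) := by
  cases k with
  | none => exact isOpen_lt (by fun_prop) continuous_const
  | some i => exact isOpen_lt (by fun_prop) (by fun_prop)

theorem convex_complComponent (k : Option ι) : Convex ℝ (complComponent k) := by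
  cases k with
  | none =>
    simpa [complComponent] using (convexOn_sum_exp_linearMap Finset.univ
      (LinearMap.proj (R := ℝ) (φ := fun _ : ι => ℝ))).convex_lt 1
  | some i =>
    -- after dividing by `exp (u i)`, the terms are `exp (-u i)` and `exp (u j - u i)`
    let pr : ι → (ι → ℝ) →ₗ[ℝ] ℝ := LinearMap.proj
    let ℓ : Option ι → (ι → ℝ) →ₗ[ℝ] ℝ := fun k => k.elim (-pr i) fun j => pr j - pr i
    have hset : complComponent (some i) = {u ∈ univ | ∑ k, exp (ℓ k u) < 2} := by
      ext u
      have hdiv : exp (-u i) + ∑ j, exp (u j - u i) = (1 + ∑ j, exp (u j)) / exp (u i) := by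
        rw [add_div, Finset.sum_div, one_div, exp_neg]
        simp only [exp_sub]
      simp only [complComponent, mem_ofPred_eq, mem_univ, true_and, Fintype.sum_option, ℓ,
        pr, Option.elim, LinearMap.neg_apply, LinearMap.sub_apply, LinearMap.proj_apply, hdiv,
        div_lt_iff₀ (exp_pos _)]
    rw [hset]
    exact (convexOn_sum_exp_linearMap Finset.univ ℓ).convex_lt 2

theorem complComponent_nonempty (k : Option ι) : (complComponent k).Nonempty := by
  classical
  have hN : (0 : ℝ) < Fintype.card ι + 1 := by positivity
  cases k with
  | none =>
    refine ⟨fun _ => -log (Fintype.card ι + 1), ?_⟩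
    simp only [complComponent, mem_ofPred_eq, exp_neg, exp_log hN, Finset.sum_const,
      Finset.card_univ, nsmul_eq_mul]
    rw [← div_eq_mul_inv, div_lt_one hN]
    linarith
  | some i =>
    set u : ι → ℝ := Pi.single i (log (Fintype.card ι + 1))
    have herase : ∑ j ∈ Finset.univ.erase i, exp (u j) < Fintype.card ι := by
      rw [Finset.sum_congr rfl fun j hj => by
          rw [show u j = 0 from Pi.single_eq_of_ne (Finset.ne_of_mem_erase hj) _, exp_zero],
        Finset.sum_const, nsmul_one]
      exact_mod_cast Finset.card_erase_lt_of_mem (Finset.mem_univ i)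
    refine ⟨u, ?_⟩
    simp only [complComponent, mem_ofPred_eq, ← Finset.add_sum_erase _ _ (Finset.mem_univ i)]
    rw [show u i = log (Fintype.card ι + 1) from Pi.single_eq_same _ _, exp_log hN]
    linarith

theorem mem_complComponent_some_iff [DecidableEq ι] {u : ι → ℝ} {i : ι} :
    u ∈ complComponent (some i) ↔ 1 + ∑ j ∈ Finset.univ.erase i, exp (u j) < exp (u i) := by
  rw [complComponent, mem_ofPred_eq, ← Finset.add_sum_erase _ _ (Finset.mem_univ i)]
  constructor <;> intro h <;> linarith

theorem pairwise_disjoint_complComponent : Pairwise (Disjoint on complComponent (ι := ι)) := by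
  classical
  have hle : ∀ (u : ι → ℝ) {i j}, j ≠ i → exp (u j) ≤ ∑ k ∈ Finset.univ.erase i, exp (u k) :=
    fun u i j hji => Finset.single_le_sum (fun k _ => (exp_pos _).le)
      (Finset.mem_erase.2 ⟨hji, Finset.mem_univ j⟩)
  have hnone : ∀ (u : ι → ℝ) i, u ∈ complComponent (some i) → u ∉ complComponent none := by
    intro u i hu hu'
    rw [mem_complComponent_some_iff] at hu
    rw [complComponent, mem_ofPred_eq, ← Finset.add_sum_erase _ _ (Finset.mem_univ i)] at hu'
    linarith [Finset.sum_nonneg fun j (_ : j ∈ Finset.univ.erase i) => (exp_pos (u j)).le]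
  suffices h : ∀ k k' u, u ∈ complComponent k → u ∈ complComponent k' → k = k' from
    fun k k' hkk' => disjoint_left.2 fun u hu hu' => hkk' (h k k' u hu hu')
  rintro (_ | i) (_ | j) u hu hu'
  · rfl
  · exact (hnone u j hu' hu).elim
  · exact (hnone u i hu hu').elim
  · by_contra hij
    have hij : i ≠ j := by simpa using hij
    rw [mem_complComponent_some_iff] at hu hu'
    linarith [hle u hij, hle u hij.symm]

theorem iUnion_complComponent : ⋃ k, complComponent k = (hyperplaneAmoeba ι)ᶜ := by
  ext u
  rw [iUnion_option, mem_compl_iff, mem_hyperplaneAmoeba_iff]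
  simp only [complComponent, mem_union, mem_iUnion, mem_ofPred_eq, not_and_or, not_le, not_forall]

theorem nat_card_connectedComponents_compl :
    Nat.card (ConnectedComponents ↥(hyperplaneAmoeba ι)ᶜ) = Fintype.card ι + 1 := by
  rw [nat_card_connectedComponents_eq_of_iUnion_eq isOpen_complComponent
    (fun k => ⟨complComponent_nonempty k, (convex_complComponent k).isPreconnected⟩)
    pairwise_disjoint_complComponent iUnion_complComponent, Nat.card_eq_fintype_card,
    Fintype.card_option]

end hyperplaneAmoeba

theorem div_mem_hyperplaneAmoeba_iff {ι : Type*} [Fintype ι] {p : ι → ℕ} (hp : ∀ i, p i ≠ 0)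
    {v : ι → ℝ} : (fun i => v i / p i) ∈ hyperplaneAmoeba ι ↔
      ∃ x : ι → ℂ, ((∀ i, x i ≠ 0) ∧ ∃ ξ : ι → ℂ, (∀ i, ξ i ^ p i = x i) ∧ ∑ i, ξ i = 1) ∧
        ∀ i, v i = log ‖x i‖ := by
  have hp' : ∀ i, (p i : ℝ) ≠ 0 := fun i => Nat.cast_ne_zero.2 (hp i)
  constructor
  · rintro ⟨ξ, hξ, hsum⟩
    have hξ₀ : ∀ i, ξ i ≠ 0 := fun i => norm_pos_iff.1 (hξ i ▸ exp_pos _)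
    refine ⟨fun i => ξ i ^ p i, ⟨fun i => pow_ne_zero _ (hξ₀ i), ξ, fun i => rfl, hsum⟩,
      fun i => ?_⟩
    rw [norm_pow, hξ i, ← exp_nat_mul, log_exp, mul_div_cancel₀ _ (hp' i)]
  · rintro ⟨x, ⟨hx, ξ, hξx, hsum⟩, hv⟩
    refine ⟨ξ, fun i => ?_, hsum⟩
    have hξ₀ : ξ i ≠ 0 := fun h => hx i (by rw [← hξx i, h, zero_pow (hp i)])
    show _ = exp (v i / p i)
    rw [hv i, ← hξx i, norm_pow, log_pow, mul_div_cancel_left₀ _ (hp' i),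
      exp_log (norm_pos_iff.2 hξ₀)]

theorem stmt5_general (n : ℕ) (p : Fin n → ℕ) (hp : ∀ i, 1 ≤ p i)
    (V : Set (Fin n → ℂ))
    (hV : V = {x | (∀ i, x i ≠ 0) ∧
      ∃ ξ : Fin n → ℂ, (∀ i, ξ i ^ p i = x i) ∧ (∑ i, ξ i) = 1})
    (LogV : Set (Fin n → ℝ))
    (hLogV : LogV = {v | ∃ x ∈ V, ∀ i, v i = Real.log ‖x i‖}) :
    Nat.card (ConnectedComponents {v : Fin n → ℝ // v ∉ LogV}) = n + 1 := by
  have hp₀ : ∀ i, p i ≠ 0 := fun i => Nat.one_le_iff_ne_zero.1 (hp i)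
  let D : (Fin n → ℝ) ≃ₜ (Fin n → ℝ) := Homeomorph.piCongrRight fun i =>
    Homeomorph.mulRight₀ (p i : ℝ)⁻¹ (inv_ne_zero (Nat.cast_ne_zero.2 (hp₀ i)))
  have hD : ∀ v, v ∈ LogV ↔ D v ∈ hyperplaneAmoeba (Fin n) := fun v => by
    subst hV hLogV
    exact (div_mem_hyperplaneAmoeba_iff hp₀).symm
  rw [nat_card_connectedComponents_congr (D.subtype (q := (· ∈ (hyperplaneAmoeba _)ᶜ))
    fun v => (hD v).not), hyperplaneAmoeba.nat_card_connectedComponents_compl, Fintype.card_fin]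

/-- The complement of the amoeba of the denominator of the Bergman kernel of the complex
ellipsoidal domain `D^{p₁,…,p_n}` has exactly `n + 1` connected components. -/
theorem stmt5 (n : ℕ) (hn : 1 ≤ n) (p : Fin n → ℕ) (hp : ∀ i, 1 ≤ p i)
    (V : Set (Fin n → ℂ))
    (hV : V = {x | (∀ i, x i ≠ 0) ∧
      ∃ ξ : Fin n → ℂ, (∀ i, ξ i ^ p i = x i) ∧ (∑ i, ξ i) = 1})
    (LogV : Set (Fin n → ℝ))
    (hLogV : LogV = {v | ∃ x ∈ V, ∀ i, v i = Real.log ‖x i‖}) :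
    Nat.card (ConnectedComponents {v : Fin n → ℝ // v ∉ LogV}) = n + 1 :=
  stmt5_general n p hp V hV LogV hLogV
end

section
/- Let P_1,…,P_n, Q_1,…,Q_n ∈ ℂ[s_1,…,s_n] and γ ∈ ℂ^n, and assume the compatibility identities P_i(s)·P_j(s+e_i)·Q_j(s+e_j)·Q_i(s+e_i+e_j) = P_j(s)·P_i(s+e_j)·Q_i(s+e_i)·Q_j(s+e_i+e_j) hold identically in s for all i, j. Let S ⊆ ℤ^n be such that for every s ∈ S and every i: P_i(s+γ) ≠ 0 or Q_i(s+γ+e_i) ≠ 0. Define S_i' = {s ∈ S : s+e_i ∉ S} and S_i'' = {s ∉ S : s+e_i ∈ S}. Then there exists a function φ : ℤ^n → ℂ with {s ∈ ℤ^n : φ(s) ≠ 0} = S satisfying φ(s+e_i)·Q_i(s+γ+e_i) = φ(s)·P_i(s+γ) for all s ∈ ℤ^n and all i = 1,…,n, if and only if the following conditions hold for every i = 1,…,n: P_i(s+γ) = 0 for all s ∈ S_i'; Q_i(s+γ+e_i) = 0 for all s ∈ S_i''; P_i(s+γ) ≠ 0 for all s ∈ S ∖ S_i'; and Q_i(s+γ+e_i)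 ≠ 0 for all s ∈ S. -/
/-!
Necessity is read off the difference equations pointwise. For sufficiency, let `K` be the field
of rational functions and `Rᵢ = Pᵢ(s) / Qᵢ(s + eᵢ) ∈ K`. The compatibility identities say
precisely that the elements `(Rᵢ, eᵢ)` of `Kˣ ⋊ ℤⁿ`, with `ℤⁿ` acting by translation, commute.
Hence they generate a homomorphism from `ℤⁿ`, so the product of the translates of the `Rᵢ` along
a lattice path depends, as a rational function, only on the endpoints of the path. Consider
only steps `s → s + eᵢ` at which both `Pᵢ(s + γ)` and `Qᵢ(s + γ + eᵢ)` are nonzero. Along such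
steps every factor is regular and nonvanishing where it gets evaluated. So, after fixing a base
point in each connected component, the numerical products along paths define a nowhere-vanishing
solution `ψ` on all of these steps. The solution with support `S` is `ψ` restricted to `S`, and
the boundary conditions on `S` are exactly what makes the equations hold across `∂S`.
-/

open MvPolynomial Relation

noncomputable section

namespace HornSupport

theorem exists_base_reflTransGen_symmGen {α : Type*} (r : α → α → Prop) :
    ∃ b : α → α, (∀ a, ReflTransGen (SymmGen r) (b a) a) ∧ ∀ a a', r a a' → b a = b a' :=
  ⟨fun a => (Quot.mk r a).out,
    fun _ => EqvGen.reflTransGen_symmGen r ▸ Quot.eqvGen_exact (Quot.out_eq _),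
    fun _ _ h => congrArg Quot.out (Quot.sound h)⟩

section Support

variable {α ι R : Type*} [Add α] [MulZeroClass R] {S : Set α} {e : ι → α} {p q : α → ι → R}

theorem support_conditions_of_solution [NoZeroDivisors R] {φ : α → R}
    (hφ : {s | φ s ≠ 0} = S) (heq : ∀ s i, φ (s + e i) * q s i = φ s * p s i)
    (hreg : ∀ s ∈ S, ∀ i, p s i ≠ 0 ∨ q s i ≠ 0) (i : ι) :
    (∀ s ∈ S, s + e i ∉ S → p s i = 0) ∧ (∀ s ∉ S, s + e i ∈ S → q s i = 0) ∧
      (∀ s ∈ S, s + e i ∈ S → p s i ≠ 0) ∧ ∀ s ∈ S, q s i ≠ 0 := by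
  subst hφ
  have hq : ∀ s, φ s ≠ 0 → q s i ≠ 0 := fun s hs hq => by
    have := heq s i
    rw [hq, mul_zero, eq_comm, mul_eq_zero] at this
    exact (hreg s hs i).elim (fun hp => this.elim hs hp) (· hq)
  refine ⟨fun s (hs : φ s ≠ 0) ht => ?_, fun s hs (ht : φ (s + e i) ≠ 0) => ?_,
    fun s hs (ht : φ (s + e i) ≠ 0) hp => ?_, hq⟩
  · simpa [not_not.1 ht, hs] using heq s i
  · simpa [not_not.1 hs, ht] using heq s i
  · simpa [hp, ht, hq s hs] using heq s i

theorem exists_solution_of_support_conditions {ψ : α → R} (hψ : ∀ s, ψ s ≠ 0)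
    (hψeq : ∀ s i, p s i ≠ 0 → q s i ≠ 0 → ψ (s + e i) * q s i = ψ s * p s i)
    (hcond : ∀ i, (∀ s ∈ S, s + e i ∉ S → p s i = 0) ∧ (∀ s ∉ S, s + e i ∈ S → q s i = 0) ∧
      (∀ s ∈ S, s + e i ∈ S → p s i ≠ 0) ∧ ∀ s ∈ S, q s i ≠ 0) :
    ∃ φ : α → R, {s | φ s ≠ 0} = S ∧ ∀ s i, φ (s + e i) * q s i = φ s * p s i := by
  classical
  refine ⟨S.indicator ψ, by ext s; by_cases hs : s ∈ S <;> simp [hs, hψ], fun s i => ?_⟩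
  obtain ⟨h₁, h₂, h₃, h₄⟩ := hcond i
  by_cases hs : s ∈ S <;> by_cases ht : s + e i ∈ S
  · simpa [hs, ht] using hψeq s i (h₃ s hs ht) (h₄ s hs)
  · simp [hs, ht, h₁ s hs ht]
  · simp [hs, ht, h₂ s hs ht]
  · simp [hs, ht]

end Support

variable {k σ : Type*} [Field k]

def translateEnd : Multiplicative (σ → k) →* (MvPolynomial σ k →ₐ[k] MvPolynomial σ k) where
  toFun v := aeval fun i => X i + C (v.toAdd i)
  map_one' := algHom_ext fun i => by simp
  map_mul' v w := algHom_ext fun i => by simp [AlgHom.mul_apply, add_assoc]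

def translate : Multiplicative (σ → k) →* (MvPolynomial σ k ≃ₐ[k] MvPolynomial σ k) :=
  (AlgEquiv.algHomUnitsEquiv k _).toMonoidHom.comp translateEnd.toHomUnits

@[simp]
lemma eval_translate (v x : σ → k) (p : MvPolynomial σ k) :
    eval x (translate (.ofAdd v) p) = eval (x + v) p := by
  change eval₂Hom (RingHom.id k) x (bind₁ (fun i => X i + C (v i)) p) = _
  rw [eval₂Hom_bind₁]
  exact congrArg (eval₂Hom (RingHom.id k) · p) (funext fun i => by simp)

@[simp]
lemma intCast_comp_single [DecidableEq σ] (i : σ) :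
    (Int.cast ∘ Pi.single i 1 : σ → k) = Pi.single i 1 := by
  ext j
  rcases eq_or_ne j i with rfl | hj <;> simp [*]

abbrev RatFn (k σ : Type*) [Field k] := FractionRing (MvPolynomial σ k)

def shift : Multiplicative (σ → ℤ) →* (RatFn k σ ≃ₐ[k] RatFn k σ) :=
  (IsFractionRing.fieldEquivOfAlgEquivHom k (RatFn k σ)).comp <| translate.comp
    (AddMonoidHom.compLeft (Int.castAddHom k) σ).toMultiplicative

lemma shift_algebraMap (a : σ → ℤ) (p : MvPolynomial σ k) :
    shift (.ofAdd a) (algebraMap _ (RatFn k σ) p) =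
      algebraMap _ _ (translate (.ofAdd (Int.cast ∘ a)) p) :=
  IsFractionRing.fieldEquivOfAlgEquiv_algebraMap _ _ _ _ p

@[simp]
lemma val_toMulAut_shift (a : Multiplicative (σ → ℤ)) (u : (RatFn k σ)ˣ) :
    ((MulDistribMulAction.toMulAut _ _ (shift (k := k) a) u : (RatFn k σ)ˣ) : RatFn k σ) =
      shift a u :=
  rfl

section HasValueAt

-- Nonvanishing at `x` is built in, so that the relation is stable under inversion.
def HasValueAt (u : (RatFn k σ)ˣ) (x : σ → k) (c : k) : Prop :=
  ∃ p q : MvPolynomial σ k, eval x p ≠ 0 ∧ eval x q ≠ 0 ∧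
    (u : RatFn k σ) = algebraMap _ _ p / algebraMap _ _ q ∧ c = eval x p / eval x q

variable {u v : (RatFn k σ)ˣ} {x : σ → k} {c d : k}

lemma HasValueAt.ne_zero (h : HasValueAt u x c) : c ≠ 0 := by
  obtain ⟨p, q, hp, hq, -, rfl⟩ := h
  exact div_ne_zero hp hq

lemma hasValueAt_one (x : σ → k) : HasValueAt 1 x 1 :=
  ⟨1, 1, by simp, by simp, by simp, by simp⟩

lemma HasValueAt.mul (hu : HasValueAt u x c) (hv : HasValueAt v x d) :
    HasValueAt (u * v) x (c * d) := by
  obtain ⟨p, q, hp, hq, hu, rfl⟩ := hu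
  obtain ⟨p', q', hp', hq', hv, rfl⟩ := hv
  refine ⟨p * p', q * q', by simp [hp, hp'], by simp [hq, hq'], ?_, ?_⟩
  · simp [hu, hv, div_mul_div_comm]
  · simp [div_mul_div_comm]

lemma HasValueAt.inv (h : HasValueAt u x c) : HasValueAt u⁻¹ x c⁻¹ := by
  obtain ⟨p, q, hp, hq, hu, rfl⟩ := h
  exact ⟨q, p, hq, hp, by simp [hu], by simp⟩

lemma HasValueAt.unique (hc : HasValueAt u x c) (hd : HasValueAt u x d) : c = d := by
  obtain ⟨p, q, hp, hq, hu, rfl⟩ := hc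
  obtain ⟨p', q', hp', hq', hu', rfl⟩ := hd
  have hq₀ : q ≠ 0 := by rintro rfl; simp at hq
  have hq₀' : q' ≠ 0 := by rintro rfl; simp at hq'
  have hK : algebraMap _ (RatFn k σ) (p * q') = algebraMap _ _ (p' * q) := by
    rw [map_mul, map_mul, ← div_eq_div_iff, ← hu, ← hu'] <;>
      exact (map_ne_zero_iff _ (IsFractionRing.injective _ _)).2 ‹_›
  have := congrArg (eval x) (IsFractionRing.injective _ _ hK)
  rw [div_eq_div_iff hq hq']
  simpa using this

lemma HasValueAt.shift_smul {a : σ → ℤ} (h : HasValueAt u (x + Int.cast ∘ a) c) :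
    HasValueAt (shift (k := k) (.ofAdd a) • u) x c := by
  obtain ⟨p, q, hp, hq, hu, rfl⟩ := h
  refine ⟨translate (.ofAdd (Int.cast ∘ a)) p, translate (.ofAdd (Int.cast ∘ a)) q,
    by simpa using hp, by simpa using hq, ?_, by simp⟩
  simp [hu, shift_algebraMap]

end HasValueAt

section Cocycle

variable [DecidableEq σ] (P Q : σ → MvPolynomial σ k)

def IsCompatible : Prop :=
  ∀ i j, P i * translate (.ofAdd (Pi.single i 1)) (P j) *
        translate (.ofAdd (Pi.single j 1)) (Q j) *
        translate (.ofAdd (Pi.single i 1 + Pi.single j 1)) (Q i) =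
      P j * translate (.ofAdd (Pi.single j 1)) (P i) *
        translate (.ofAdd (Pi.single i 1)) (Q i) *
        translate (.ofAdd (Pi.single i 1 + Pi.single j 1)) (Q j)

lemma isCompatible_iff_forall_eval [Infinite k] :
    IsCompatible P Q ↔ ∀ i j x,
      eval x (P i) * eval (x + Pi.single i 1) (P j) * eval (x + Pi.single j 1) (Q j) *
          eval (x + Pi.single i 1 + Pi.single j 1) (Q i) =
        eval x (P j) * eval (x + Pi.single j 1) (P i) * eval (x + Pi.single i 1) (Q i) *
          eval (x + Pi.single i 1 + Pi.single j 1) (Q j) := by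
  simp only [IsCompatible, MvPolynomial.funext_iff, map_mul, eval_translate, add_assoc]

def IsRegularStep (γ : σ → k) (s t : σ → ℤ) : Prop :=
  ∃ i, t = s + Pi.single i 1 ∧ eval (Int.cast ∘ s + γ) (P i) ≠ 0 ∧
    eval (Int.cast ∘ s + γ + Pi.single i 1) (Q i) ≠ 0

def ratio (i : σ) : RatFn k σ :=
  algebraMap _ _ (P i) / algebraMap _ _ (translate (.ofAdd (Pi.single i 1)) (Q i))

abbrev ShiftProd (k σ : Type*) [Field k] :=
  (RatFn k σ)ˣ ⋊[(MulDistribMulAction.toMulAut _ _).comp (shift (k := k) (σ := σ))]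
    Multiplicative (σ → ℤ)

-- If `ratio P Q i = 0` there is no regular step in direction `i`, so the generator is trivial.
open Classical in
def generator (i : σ) : ShiftProd k σ :=
  if h : ratio P Q i = 0 then 1 else ⟨Units.mk0 _ h, .ofAdd (Pi.single i 1)⟩

variable {P Q}

lemma ratio_ne_zero {x : σ → k} {i : σ} (hP : eval x (P i) ≠ 0)
    (hQ : eval (x + Pi.single i 1) (Q i) ≠ 0) : ratio P Q i ≠ 0 := by
  simp only [ratio, ne_eq, div_eq_zero_iff, IsFractionRing.to_map_eq_zero_iff,
    map_eq_zero_iff _ (AlgEquiv.injective _), not_or]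
  exact ⟨fun h => hP (by simp [h]), fun h => hQ (by simp [h])⟩

lemma hasValueAt_ratio {x : σ → k} {i : σ} (h : ratio P Q i ≠ 0) (hP : eval x (P i) ≠ 0)
    (hQ : eval (x + Pi.single i 1) (Q i) ≠ 0) :
    HasValueAt (Units.mk0 _ h) x (eval x (P i) / eval (x + Pi.single i 1) (Q i)) :=
  ⟨P i, _, hP, by simpa using hQ, rfl, by simp⟩

lemma shift_single_ratio (i j : σ) :
    shift (.ofAdd (Pi.single i 1)) (ratio P Q j) =
      algebraMap _ _ (translate (.ofAdd (Pi.single i 1)) (P j)) /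
        algebraMap _ _ (translate (.ofAdd (Pi.single i 1 + Pi.single j 1)) (Q j)) := by
  simp [ratio, shift_algebraMap, ofAdd_add, AlgEquiv.mul_apply]

lemma commute_generator (hcompat : IsCompatible P Q) (i j : σ) :
    Commute (generator P Q i) (generator P Q j) := by
  unfold generator
  split_ifs with hi hj hj
  · exact .one_left _
  · exact .one_left _
  · exact .one_right _
  refine SemidirectProduct.ext ?_ (mul_comm _ _)
  ext
  simp only [SemidirectProduct.mul_left, Units.val_mul, MonoidHom.comp_apply,
    val_toMulAut_shift, Units.val_mk0, shift_single_ratio]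
  simp only [ratio, div_eq_zero_iff, IsFractionRing.to_map_eq_zero_iff,
    map_eq_zero_iff _ (AlgEquiv.injective _), not_or] at hi hj
  rw [ratio, ratio, div_mul_div_comm, div_mul_div_comm, div_eq_div_iff]
  · rw [add_comm (Pi.single j 1)]
    have := congrArg (algebraMap _ (RatFn k σ)) (hcompat i j)
    simp only [map_mul] at this
    linear_combination this
  all_goals simp [hi.2, hj.2]

lemma pairwise_commute_zpowersHom_generator (hcompat : IsCompatible P Q) :
    Pairwise fun i j => ∀ x y : Multiplicative ℤ,
      Commute (zpowersHom _ (generator P Q i) x) (zpowersHom _ (generator P Q j) y) :=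
  fun i j _ _ _ => (commute_generator hcompat i j).zpow_zpow _ _

variable [Fintype σ] (hcompat : IsCompatible P Q)

def generatorHom : Multiplicative (σ → ℤ) →* ShiftProd k σ :=
  (MonoidHom.noncommPiCoprod _ (pairwise_commute_zpowersHom_generator hcompat)).comp
    (MulEquiv.funMultiplicative σ ℤ).toMonoidHom

lemma generatorHom_add_single (a : σ → ℤ) (i : σ) :
    generatorHom hcompat (.ofAdd (a + Pi.single i 1)) =
      generatorHom hcompat (.ofAdd a) * generator P Q i := by
  have : MulEquiv.funMultiplicative σ ℤ (.ofAdd (Pi.single i 1)) = Pi.mulSingle i (.ofAdd 1) := by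
    ext j
    rcases eq_or_ne j i with rfl | hj <;> simp [MulEquiv.piMultiplicative, *]
  rw [ofAdd_add, map_mul]
  simp only [generatorHom, MonoidHom.comp_apply, MulEquiv.coe_toMonoidHom, this]
  rw [MonoidHom.noncommPiCoprod_mulSingle, zpowersHom_apply, toAdd_ofAdd, zpow_one]

/- `c` is the value at `β + γ` of the product of the translated ratios along a path of regular
steps from `β` to `s`. The lattice component has to be tracked, because a trivial generator
does not move it. -/
def HasPathValue (γ : σ → k) (β s : σ → ℤ) (c : k) : Prop :=
  (generatorHom hcompat (.ofAdd (s - β))).right = .ofAdd (s - β) ∧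
    HasValueAt (generatorHom hcompat (.ofAdd (s - β))).left (Int.cast ∘ β + γ) c

lemma hasPathValue_add_single_iff {γ : σ → k} {β s : σ → ℤ} {i : σ} {c : k}
    (hP : eval (Int.cast ∘ s + γ) (P i) ≠ 0)
    (hQ : eval (Int.cast ∘ s + γ + Pi.single i 1) (Q i) ≠ 0) :
    HasPathValue hcompat γ β (s + Pi.single i 1)
        (c * (eval (Int.cast ∘ s + γ) (P i) / eval (Int.cast ∘ s + γ + Pi.single i 1) (Q i))) ↔
      HasPathValue hcompat γ β s c := by
  have hi := ratio_ne_zero hP hQ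
  set w := Units.mk0 _ hi
  have hx : Int.cast ∘ β + γ + Int.cast ∘ (s - β) = (Int.cast ∘ s + γ : σ → k) := by
    ext; simp; ring
  have hw : HasValueAt (shift (k := k) (.ofAdd (s - β)) • w) (Int.cast ∘ β + γ)
      (eval (Int.cast ∘ s + γ) (P i) / eval (Int.cast ∘ s + γ + Pi.single i 1) (Q i)) := by
    apply HasValueAt.shift_smul
    rw [hx]
    exact hasValueAt_ratio hi hP hQ
  have hmul : generatorHom hcompat (.ofAdd (s + Pi.single i 1 - β)) =
      generatorHom hcompat (.ofAdd (s - β)) * ⟨w, .ofAdd (Pi.single i 1)⟩ := by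
    rw [add_sub_right_comm, generatorHom_add_single, generator, dif_neg hi]
  unfold HasPathValue
  rw [hmul, SemidirectProduct.mul_right, SemidirectProduct.mul_left, add_sub_right_comm,
    ofAdd_add, mul_left_inj]
  refine and_congr_right fun hr => ?_
  simp only [hr, MonoidHom.comp_apply, MulDistribMulAction.toMulAut_apply,
    MulDistribMulAction.toMulEquiv_apply]
  constructor
  · intro hv
    have := hv.mul hw.inv
    rwa [mul_inv_cancel_right, mul_inv_cancel_right₀ hw.ne_zero] at this
  · intro hv
    exact hv.mul hw

lemma exists_hasPathValue_of_reflTransGen {γ : σ → k} {β s : σ → ℤ}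
    (h : ReflTransGen (SymmGen (IsRegularStep P Q γ)) β s) :
    ∃ c, HasPathValue hcompat γ β s c := by
  induction h with
  | refl => exact ⟨1, by simp [HasPathValue, hasValueAt_one]⟩
  | tail _ hst ih =>
    obtain ⟨c, hc⟩ := ih
    rcases hst with ⟨i, rfl, hP, hQ⟩ | ⟨i, rfl, hP, hQ⟩
    · exact ⟨_, (hasPathValue_add_single_iff hcompat hP hQ).2 hc⟩
    · rw [← div_mul_cancel₀ c (div_ne_zero hP hQ)] at hc
      exact ⟨_, (hasPathValue_add_single_iff hcompat hP hQ).1 hc⟩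

end Cocycle

theorem exists_forall_ne_zero_solution [Fintype σ] [DecidableEq σ]
    {P Q : σ → MvPolynomial σ k} (hcompat : IsCompatible P Q) (γ : σ → k) :
    ∃ ψ : (σ → ℤ) → k, (∀ s, ψ s ≠ 0) ∧ ∀ s i,
      eval (Int.cast ∘ s + γ) (P i) ≠ 0 → eval (Int.cast ∘ s + γ + Pi.single i 1) (Q i) ≠ 0 →
        ψ (s + Pi.single i 1) * eval (Int.cast ∘ s + γ + Pi.single i 1) (Q i) =
          ψ s * eval (Int.cast ∘ s + γ) (P i) := by
  obtain ⟨b, hb, hb_eq⟩ := exists_base_reflTransGen_symmGen (IsRegularStep P Q γ)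
  choose ψ hψ using fun s => exists_hasPathValue_of_reflTransGen hcompat (hb s)
  refine ⟨ψ, fun s => (hψ s).2.ne_zero, fun s i hP hQ => ?_⟩
  have hnext := hψ (s + Pi.single i 1)
  rw [← hb_eq _ _ ⟨i, rfl, hP, hQ⟩] at hnext
  have := (hasPathValue_add_single_iff hcompat hP hQ).2 (hψ s)
  rw [hnext.2.unique this.2]
  field_simp

end HornSupport

end

/-- Sadykov's characterization of the possible supports of series solutions to a Horn
system of hypergeometric difference equations. -/
theorem stmt6 (n : ℕ) (P Q : Fin n → MvPolynomial (Fin n) ℂ) (γ : Fin n → ℂ)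
    (ι : (Fin n → ℤ) → (Fin n → ℂ)) (hι : ∀ s j, ι s j = (s j : ℂ))
    (eC : Fin n → (Fin n → ℂ)) (heC : ∀ i, eC i = Pi.single i 1)
    (eZ : Fin n → (Fin n → ℤ)) (heZ : ∀ i, eZ i = Pi.single i 1)
    (hcompat : ∀ (i j : Fin n) (s : Fin n → ℂ),
      eval s (P i) * eval (s + eC i) (P j) * eval (s + eC j) (Q j) *
          eval (s + eC i + eC j) (Q i) =
        eval s (P j) * eval (s + eC j) (P i) * eval (s + eC i) (Q i) *
          eval (s + eC i + eC j) (Q j))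
    (S : Set (Fin n → ℤ))
    (hreg : ∀ s ∈ S, ∀ i : Fin n,
      eval (ι s + γ) (P i) ≠ 0 ∨ eval (ι s + γ + eC i) (Q i) ≠ 0) :
    (∃ φ : (Fin n → ℤ) → ℂ, {s | φ s ≠ 0} = S ∧
      ∀ (s : Fin n → ℤ) (i : Fin n),
        φ (s + eZ i) * eval (ι s + γ + eC i) (Q i) = φ s * eval (ι s + γ) (P i)) ↔
    (∀ i : Fin n,
      (∀ s ∈ S, s + eZ i ∉ S → eval (ι s + γ) (P i) = 0) ∧
      (∀ s ∉ S, s + eZ i ∈ S → eval (ι s + γ + eC i) (Q i) = 0) ∧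
      (∀ s ∈ S, s + eZ i ∈ S → eval (ι s + γ) (P i) ≠ 0) ∧
      (∀ s ∈ S, eval (ι s + γ + eC i) (Q i) ≠ 0)) := by
  obtain rfl : ι = fun s => Int.cast ∘ s := funext fun s => funext (hι s)
  obtain rfl : eC = fun i => Pi.single i 1 := funext heC
  obtain rfl : eZ = fun i => Pi.single i 1 := funext heZ
  constructor
  · rintro ⟨φ, hφ, heq⟩
    exact HornSupport.support_conditions_of_solution hφ heq hreg
  · intro hcond
    obtain ⟨ψ, hψ, hψeq⟩ := HornSupport.exists_forall_ne_zero_solution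
      ((HornSupport.isCompatible_iff_forall_eval P Q).2 hcompat) γ
    exact HornSupport.exists_solution_of_support_conditions hψ hψeq hcond
end

section
/- Let S ⊆ ℤ^n, let a : S → ℂ, and let x⁰ ∈ (ℂ∖{0})^n be such that ∑_{s∈S} |a(s)·(x⁰)^s| < ∞. Let C ⊆ ℝ^n be a convex cone (containing 0) with S ⊆ C. Then for every x ∈ (ℂ∖{0})^n with Log x ∈ Log x⁰ − C^∨, the series converges absolutely at x: ∑_{s∈S} |a(s)·x^s| < ∞. -/
/-! Since `‖x ^ s‖ = exp ⟨s, Log x⟩`, the dual-cone condition on `Log x⁰ - Log x` gives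
`‖x ^ s‖ ≤ ‖x⁰ ^ s‖` for every `s ∈ S ⊆ C`, and the series at `x` is dominated termwise by
the series at `x⁰`. -/

theorem norm_zpow_eq_exp_mul_log {𝕜 : Type*} [NormedDivisionRing 𝕜] {y : 𝕜} (hy : y ≠ 0)
    (k : ℤ) :
    ‖y ^ k‖ = Real.exp (k * Real.log ‖y‖) := by
  rw [norm_zpow, ← Real.log_zpow, Real.exp_log (zpow_pos (norm_pos_iff.mpr hy) k)]

section MonomialNorm

variable {𝕜 ι : Type*} [NormedField 𝕜] [Fintype ι]

theorem norm_prod_zpow_eq_exp_sum {y : ι → 𝕜} (hy : ∀ j, y j ≠ 0)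
    (s : ι → ℤ) : ‖∏ j, y j ^ s j‖ = Real.exp (∑ j, (s j : ℝ) * Real.log ‖y j‖) := by
  rw [norm_prod, Real.exp_sum]
  exact Finset.prod_congr rfl fun j _ => norm_zpow_eq_exp_mul_log (hy j) (s j)

theorem norm_prod_zpow_le_of_sum_mul_log_sub_nonneg {x y : ι → 𝕜} (hx : ∀ j, x j ≠ 0)
    (hy : ∀ j, y j ≠ 0) {s : ι → ℤ}
    (hs : 0 ≤ ∑ j, (s j : ℝ) * (Real.log ‖y j‖ - Real.log ‖x j‖)) :
    ‖∏ j, x j ^ s j‖ ≤ ‖∏ j, y j ^ s j‖ := by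
  rw [norm_prod_zpow_eq_exp_sum hx, norm_prod_zpow_eq_exp_sum hy, Real.exp_le_exp,
    ← sub_nonneg, ← Finset.sum_sub_distrib]
  simpa only [mul_sub] using hs

end MonomialNorm

theorem stmt9_general (n : ℕ) (S : Set (Fin n → ℤ)) (a : (Fin n → ℤ) → ℂ)
    (x0 : Fin n → ℂ) (hx0 : ∀ j, x0 j ≠ 0)
    (hconv : Summable (fun s : S => ‖a s.1 * ∏ j, x0 j ^ s.1 j‖))
    (C : Set (Fin n → ℝ))
    (hS : ∀ s ∈ S, (fun j => (s j : ℝ)) ∈ C)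
    (x : Fin n → ℂ) (hx : ∀ j, x j ≠ 0)
    (hdual : ∀ u ∈ C, 0 ≤ ∑ j, u j *
      (Real.log (‖x0 j‖) - Real.log (‖x j‖))) :
    Summable (fun s : S => ‖a s.1 * ∏ j, x j ^ s.1 j‖) := by
  refine hconv.of_nonneg_of_le (fun s => norm_nonneg _) fun s => ?_
  rw [norm_mul, norm_mul]
  exact mul_le_mul_of_nonneg_left
    (norm_prod_zpow_le_of_sum_mul_log_sub_nonneg hx hx0 (hdual _ (hS s.1 s.2))) (norm_nonneg _)

/-- Abel's lemma for Puiseux/Laurent series: if a series with support `S` contained in a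
convex cone `C` converges absolutely at `x⁰`, then it converges absolutely at every `x`
with `Log x ∈ Log x⁰ − C^∨`. -/
theorem stmt9 (n : ℕ) (S : Set (Fin n → ℤ)) (a : (Fin n → ℤ) → ℂ)
    (x0 : Fin n → ℂ) (hx0 : ∀ j, x0 j ≠ 0)
    (hconv : Summable (fun s : S => ‖a s.1 * ∏ j, x0 j ^ s.1 j‖))
    (C : Set (Fin n → ℝ)) (hCconv : Convex ℝ C) (hC0 : (0 : Fin n → ℝ) ∈ C)
    (hCcone : ∀ v ∈ C, ∀ lam : ℝ, 0 ≤ lam → lam • v ∈ C)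
    (hS : ∀ s ∈ S, (fun j => (s j : ℝ)) ∈ C)
    (x : Fin n → ℂ) (hx : ∀ j, x j ≠ 0)
    (hdual : ∀ u ∈ C, 0 ≤ ∑ j, u j *
      (Real.log (‖x0 j‖) - Real.log (‖x j‖))) :
    Summable (fun s : S => ‖a s.1 * ∏ j, x j ^ s.1 j‖) :=
  stmt9_general n S a x0 hx0 hconv C hS x hx hdual
end

section
/- Let p ≥ 1, let a_1,…,a_p ∈ ℤ be not all zero with a_1 + ⋯ + a_p = 0, and let b_1,…,b_p ∈ ℂ be such that for every k ∈ ℕ and every i the number a_i·k + b_i is not a nonpositive integer. Then the power series ∑_{k=0}^∞ (∏_{i=1}^p Γ(a_i·k + b_i))·z^k in one complex variable z has radius of convergence R with 0 < R < ∞. -/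
/-!
Since `Γ(x + a) / Γ(x) ∼ x ^ a`, the ratio `Γ(a (k + 1) + b) / Γ(a k + b)` behaves like
`(a k) ^ a`. Because `∑ aᵢ = 0` the powers of `k` cancel in the product, so the ratio of
consecutive coefficients tends to `∏ aᵢ ^ aᵢ ≠ 0` (with `0 ^ 0 = 1`), and the ratio test gives
the radius `∏ |aᵢ| ^ (-aᵢ)`.
-/

open Filter Finset Topology

theorem ascPochhammer_eval_eq_prod_range {R : Type*} [CommSemiring R] (n : ℕ) (r : R) :
    (ascPochhammer R n).eval r = ∏ j ∈ range n, (r + j) := by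
  induction n with
  | zero => simp
  | succ n ih => simp [ascPochhammer_succ_right, ih, prod_range_succ]

section LinearRatio

variable {𝕜 : Type*} [RCLike 𝕜]

theorem tendsto_mul_natCast_add_div_natCast (c d : 𝕜) :
    Tendsto (fun k : ℕ => (c * k + d) / k) atTop (𝓝 c) := by
  have h := (tendsto_const_div_atTop_nhds_zero_nat d).const_add c
  rw [add_zero] at h
  refine h.congr' ?_
  filter_upwards [eventually_ne_atTop 0] with k hk
  field_simp

theorem tendsto_prod_range_mul_natCast_add_div_natCast (n : ℕ) (c d : 𝕜) :
    Tendsto (fun k : ℕ => ∏ j ∈ range n, (c * k + d + j) / k) atTop (𝓝 (c ^ n)) := by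
  rw [pow_eq_prod_const]
  exact tendsto_finsetProd _ fun j _ => by
    simpa only [add_assoc] using tendsto_mul_natCast_add_div_natCast c (d + j)

end LinearRatio

namespace Complex

theorem Gamma_add_nat_div_Gamma_eq_prod {z : ℂ} (hz : ∀ m : ℕ, z ≠ -m) (n : ℕ) :
    Gamma (z + n) / Gamma z = ∏ j ∈ range n, (z + j) := by
  rw [Gamma_add_nat_div_Gamma_eq z hz, ascPochhammer_eval_eq_prod_range]

theorem tendsto_Gamma_int_mul_add_ratio (a : ℤ) (b : ℂ)
    (hb : ∀ k m : ℕ, (a : ℂ) * k + b ≠ -m) :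
    Tendsto (fun k : ℕ => Gamma (a * (k + 1 : ℕ) + b) / Gamma (a * k + b) * (k : ℂ) ^ (-a))
      atTop (𝓝 ((a : ℂ) ^ a)) := by
  obtain ⟨n, rfl | rfl⟩ := a.eq_nat_or_neg
  · convert tendsto_prod_range_mul_natCast_add_div_natCast n (n : ℂ) b using 2 with k
    · have harg : ((n : ℤ) : ℂ) * (k + 1 : ℕ) + b = ((n : ℤ) : ℂ) * k + b + n := by push_cast; ring
      rw [harg, Gamma_add_nat_div_Gamma_eq_prod (by simpa using hb k), prod_div_distrib,
        prod_const, card_range, zpow_neg, zpow_natCast, div_eq_mul_inv]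
      push_cast; rfl
    · push_cast
      rw [zpow_natCast]
  · have hlim : (-(n : ℂ)) ^ n ≠ 0 := by
      rcases eq_or_ne n 0 with rfl | hn <;> simp [*]
    convert (tendsto_prod_range_mul_natCast_add_div_natCast n (-n : ℂ) (b - n)).inv₀ hlim
      using 2 with k
    · set y : ℂ := ((-n : ℤ) : ℂ) * (k + 1 : ℕ) + b with hy
      have harg : ((-n : ℤ) : ℂ) * k + b = y + n := by rw [hy]; push_cast; ring
      rw [harg, ← inv_div, Gamma_add_nat_div_Gamma_eq_prod (hb (k + 1)), neg_neg, zpow_natCast,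
        prod_div_distrib, prod_const, card_range, inv_div, div_eq_inv_mul]
      congr 3 with j
      push_cast; ring
    · push_cast
      rw [zpow_neg, zpow_natCast]

end Complex

theorem prod_zpow_eq_zpow_sum₀ {G : Type*} [CommGroupWithZero G] {ι : Type*} (s : Finset ι)
    {x : G} (hx : x ≠ 0) (f : ι → ℤ) : ∏ i ∈ s, x ^ f i = x ^ ∑ i ∈ s, f i := by
  classical
  induction s using Finset.induction with
  | empty => simp
  | insert i s hi ih => rw [prod_insert hi, sum_insert hi, ih, zpow_add₀ hx]

theorem tendsto_prod_ratio_of_sum_eq_zero {𝕜 : Type*} [Field 𝕜] [TopologicalSpace 𝕜]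
    [ContinuousMul 𝕜] [CharZero 𝕜] {ι : Type*} (s : Finset ι) {f : ι → ℕ → 𝕜} {a : ι → ℤ}
    {ℓ : ι → 𝕜} (ha : ∑ i ∈ s, a i = 0)
    (hf : ∀ i ∈ s, Tendsto (fun k : ℕ => f i (k + 1) / f i k * (k : 𝕜) ^ (-a i)) atTop (𝓝 (ℓ i))) :
    Tendsto (fun k : ℕ => (∏ i ∈ s, f i (k + 1)) / ∏ i ∈ s, f i k) atTop (𝓝 (∏ i ∈ s, ℓ i)) := by
  refine (tendsto_finsetProd s hf).congr' ?_
  filter_upwards [eventually_ne_atTop 0] with k hk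
  rw [prod_mul_distrib, prod_zpow_eq_zpow_sum₀ s (Nat.cast_ne_zero.mpr hk), sum_neg_distrib, ha,
    neg_zero, zpow_zero, mul_one, prod_div_distrib]

section RatioTest

variable {𝕜 : Type*} [NormedField 𝕜] {c : ℕ → 𝕜} {ℓ : 𝕜}

theorem tendsto_norm_ratio_mul_pow (hc : ∀ k, c k ≠ 0)
    (hℓ : Tendsto (fun k => c (k + 1) / c k) atTop (𝓝 ℓ)) {z : 𝕜} (hz : z ≠ 0) :
    Tendsto (fun k => ‖c (k + 1) * z ^ (k + 1)‖ / ‖c k * z ^ k‖) atTop (𝓝 (‖ℓ‖ * ‖z‖)) := by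
  refine (hℓ.norm.mul_const ‖z‖).congr fun k => ?_
  have hzk : ‖z‖ ^ k ≠ 0 := pow_ne_zero _ (norm_ne_zero_iff.mpr hz)
  have hck : ‖c k‖ ≠ 0 := norm_ne_zero_iff.mpr (hc k)
  simp only [norm_mul, norm_pow, norm_div, pow_succ]
  field_simp

theorem summable_mul_pow_of_tendsto_ratio [CompleteSpace 𝕜] (hc : ∀ k, c k ≠ 0)
    (hℓ : Tendsto (fun k => c (k + 1) / c k) atTop (𝓝 ℓ)) {z : 𝕜} (hz : ‖ℓ‖ * ‖z‖ < 1) :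
    Summable fun k => c k * z ^ k := by
  rcases eq_or_ne z 0 with rfl | hz0
  · exact summable_of_ne_finset_zero (s := {0}) fun k hk => by
      simp [zero_pow (by simpa using hk : k ≠ 0)]
  · exact summable_of_ratio_test_tendsto_lt_one hz
      (.of_forall fun k => mul_ne_zero (hc k) (pow_ne_zero _ hz0))
      (tendsto_norm_ratio_mul_pow hc hℓ hz0)

theorem not_summable_mul_pow_of_tendsto_ratio (hc : ∀ k, c k ≠ 0)
    (hℓ : Tendsto (fun k => c (k + 1) / c k) atTop (𝓝 ℓ)) {z : 𝕜} (hz : 1 < ‖ℓ‖ * ‖z‖) :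
    ¬ Summable fun k => c k * z ^ k := by
  have hz0 : z ≠ 0 := by rintro rfl; simp at hz; linarith
  exact not_summable_of_ratio_test_tendsto_gt_one hz (tendsto_norm_ratio_mul_pow hc hℓ hz0)

end RatioTest

theorem stmt12_general (p : ℕ) (a : Fin p → ℤ)
    (hsum : ∑ i, a i = 0) (b : Fin p → ℂ)
    (hb : ∀ (k : ℕ) (i : Fin p) (m : ℕ), (a i : ℂ) * (k : ℂ) + b i ≠ -(m : ℂ)) :
    ∃ R : ℝ, 0 < R ∧ ∀ z : ℂ,
      (‖z‖ < R →
        Summable (fun k : ℕ => (∏ i, Complex.Gamma ((a i : ℂ) * (k : ℂ) + b i)) * z ^ k)) ∧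
      (R < ‖z‖ →
        ¬ Summable (fun k : ℕ => (∏ i, Complex.Gamma ((a i : ℂ) * (k : ℂ) + b i)) * z ^ k)) := by
  have hc : ∀ k : ℕ, ∏ i, Complex.Gamma ((a i : ℂ) * k + b i) ≠ 0 := fun k =>
    prod_ne_zero_iff.mpr fun i _ => Complex.Gamma_ne_zero (hb k i)
  set ℓ : ℂ := ∏ i, (a i : ℂ) ^ a i
  have hratio : Tendsto (fun k : ℕ => (∏ i, Complex.Gamma ((a i : ℂ) * (k + 1 : ℕ) + b i)) /
      ∏ i, Complex.Gamma ((a i : ℂ) * k + b i)) atTop (𝓝 ℓ) :=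
    tendsto_prod_ratio_of_sum_eq_zero (f := fun i k => Complex.Gamma ((a i : ℂ) * k + b i))
      univ hsum fun i _ => Complex.tendsto_Gamma_int_mul_add_ratio (a i) (b i) (hb · i)
  have hℓ : 0 < ‖ℓ‖ := norm_pos_iff.mpr <| prod_ne_zero_iff.mpr fun i _ => by
    rcases eq_or_ne (a i) 0 with h | h
    · simp [h]
    · exact zpow_ne_zero _ (Int.cast_ne_zero.mpr h)
  refine ⟨‖ℓ‖⁻¹, inv_pos.mpr hℓ, fun z => ⟨fun hz => ?_, fun hz => ?_⟩⟩
  · exact summable_mul_pow_of_tendsto_ratio hc hratio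
      ((lt_inv_mul_iff₀ hℓ).mp (by rwa [mul_one]))
  · exact not_summable_mul_pow_of_tendsto_ratio hc hratio ((inv_lt_iff_one_lt_mul₀' hℓ).mp hz)

/-- The restriction of a nonconfluent hypergeometric series to one variable has a finite,
positive radius of convergence. -/
theorem stmt12 (p : ℕ) (hp : 1 ≤ p) (a : Fin p → ℤ) (ha0 : ∃ i, a i ≠ 0)
    (hsum : ∑ i, a i = 0) (b : Fin p → ℂ)
    (hb : ∀ (k : ℕ) (i : Fin p) (m : ℕ), (a i : ℂ) * (k : ℂ) + b i ≠ -(m : ℂ)) :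
    ∃ R : ℝ, 0 < R ∧ ∀ z : ℂ,
      (‖z‖ < R →
        Summable (fun k : ℕ => (∏ i, Complex.Gamma ((a i : ℂ) * (k : ℂ) + b i)) * z ^ k)) ∧
      (R < ‖z‖ →
        ¬ Summable (fun k : ℕ => (∏ i, Complex.Gamma ((a i : ℂ) * (k : ℂ) + b i)) * z ^ k)) :=
  stmt12_general p a hsum b hb
end

section
/- Let M ⊆ ℝ^n be a nonempty convex open set and let U = {x ∈ (ℂ∖{0})^n : Log x ∈ M}, a Reinhardt domain. Then the fundamental group of U is commutative: for every basepoint x₀ ∈ U and all elements a, b of the fundamental group π₁(U, x₀), one has a·b = b·a. -/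
/-!
Passing to log-polar coordinates, `Log⁻¹(M) ≅ M × (S¹)ⁿ`, and since `M` is convex the straight-line
homotopy in the `M` factor deformation retracts `Log⁻¹(M)` onto the torus `Log⁻¹(m)` for any
`m ∈ M`. Hence `π₁(Log⁻¹(M))` is isomorphic to the fundamental group of the topological group
`(S¹)ⁿ`, which is commutative by the Eckmann–Hilton argument: the pointwise product of loops is a
second unital operation on `π₁` satisfying the interchange law with concatenation.
-/

open unitInterval

namespace Path

variable {G : Type*} [TopologicalSpace G] [Group G] [ContinuousMul G] {g : G}

def loopMul (p q : Path g g) : Path g g where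
  toFun t := p t * g⁻¹ * q t
  source' := by simp
  target' := by simp

theorem loopMul_refl (p : Path g g) : p.loopMul (Path.refl g) = p := by
  ext t; simp [loopMul]

theorem refl_loopMul (q : Path g g) : (Path.refl g).loopMul q = q := by
  ext t; simp [loopMul]

theorem trans_loopMul_trans (p q r s : Path g g) :
    (p.trans q).loopMul (r.trans s) = (p.loopMul r).trans (q.loopMul s) := by
  ext t
  simp only [loopMul, coe_mk_mk, trans_apply]
  split_ifs <;> rfl

theorem Homotopic.loopMul {p p' q q' : Path g g} (hp : p.Homotopic p') (hq : q.Homotopic q') :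
    (p.loopMul q).Homotopic (p'.loopMul q') := by
  obtain ⟨F⟩ := hp
  obtain ⟨H⟩ := hq
  exact ⟨{ toFun x := F x * g⁻¹ * H x
           map_zero_left t := by simp [Path.loopMul]
           map_one_left t := by simp [Path.loopMul]
           prop' t x hx := by rcases hx with rfl | rfl <;> simp [Path.loopMul] }⟩

end Path

namespace FundamentalGroup

attribute [local instance] Path.Homotopic.setoid

variable {G : Type*} [TopologicalSpace G] [Group G] [ContinuousMul G] {g : G}

def loopMul (a b : FundamentalGroup G g) : FundamentalGroup G g :=
  Quotient.map₂ Path.loopMul (fun _ _ hp _ _ hq => Path.Homotopic.loopMul hp hq) a b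

theorem isUnital_loopMul : EckmannHilton.IsUnital (loopMul (g := g)) 1 where
  left_id a := by
    induction a using Quotient.ind
    exact congrArg _ (Path.refl_loopMul _)
  right_id a := by
    induction a using Quotient.ind
    exact congrArg _ (Path.loopMul_refl _)

theorem loopMul_mul_mul (a b c d : FundamentalGroup G g) :
    loopMul (a * b) (c * d) = loopMul a c * loopMul b d := by
  induction a, b using Quotient.ind₂
  induction c, d using Quotient.ind₂
  exact congrArg _ (Path.trans_loopMul_trans _ _ _ _)

theorem mul_comm_of_group (a b : FundamentalGroup G g) : a * b = b * a :=
  (EckmannHilton.mul_comm isUnital_loopMul EckmannHilton.MulOneClass.isUnital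
    loopMul_mul_mul).comm a b

end FundamentalGroup

open CategoryTheory ContinuousMap

theorem FundamentalGroup.map_injective_of_homotopyEquiv {X Y : Type*} [TopologicalSpace X]
    [TopologicalSpace Y] (e : X ≃ₕ Y) (x : X) :
    Function.Injective (FundamentalGroup.map e.toFun x) :=
  (FundamentalGroupoidFunctor.equivOfHomotopyEquiv e).functor.map_injective

theorem FundamentalGroup.mul_comm_of_homotopyEquiv {X Y : Type*} [TopologicalSpace X]
    [TopologicalSpace Y] (e : X ≃ₕ Y) (hY : ∀ (y : Y) (a b : FundamentalGroup Y y), a * b = b * a)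
    (x : X) (a b : FundamentalGroup X x) : a * b = b * a :=
  FundamentalGroup.map_injective_of_homotopyEquiv e x <| by
    simp only [map_mul, hY]

noncomputable section

namespace Circle

def normalize (z : ℂ) (hz : z ≠ 0) : Circle :=
  ⟨z / ‖z‖, mem_sphere_zero_iff_norm.2 (by simp [hz])⟩

@[simp] theorem coe_normalize (z : ℂ) (hz : z ≠ 0) : (normalize z hz : ℂ) = z / ‖z‖ := rfl

def ofLogPolar (r : ℝ) (u : Circle) : ℂ := Real.exp r * u

theorem norm_ofLogPolar (r : ℝ) (u : Circle) : ‖ofLogPolar r u‖ = Real.exp r := by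
  simp [ofLogPolar, norm_coe]

theorem ofLogPolar_ne_zero (r : ℝ) (u : Circle) : ofLogPolar r u ≠ 0 := by
  simp [← norm_ne_zero_iff, norm_ofLogPolar, Real.exp_ne_zero]

theorem log_norm_ofLogPolar (r : ℝ) (u : Circle) : Real.log ‖ofLogPolar r u‖ = r := by
  rw [norm_ofLogPolar, Real.log_exp]

theorem ofLogPolar_log_norm_normalize {z : ℂ} (hz : z ≠ 0) :
    ofLogPolar (Real.log ‖z‖) (normalize z hz) = z := by
  rw [ofLogPolar, Real.exp_log (norm_pos_iff.mpr hz), coe_normalize,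
    mul_div_cancel₀ _ (by simpa using hz)]

theorem normalize_ofLogPolar (r : ℝ) (u : Circle) :
    normalize (ofLogPolar r u) (ofLogPolar_ne_zero r u) = u := by
  ext
  rw [coe_normalize, norm_ofLogPolar, ofLogPolar, mul_div_cancel_left₀ _ (by simp)]

@[fun_prop]
theorem continuous_ofLogPolar : Continuous fun p : ℝ × Circle => ofLogPolar p.1 p.2 := by
  unfold ofLogPolar; fun_prop

end Circle

open Circle

variable {ι : Type*}

def logAbs (x : ι → ℂ) : ι → ℝ := fun j => Real.log ‖x j‖

def reinhardtDomain (M : Set (ι → ℝ)) : Set (ι → ℂ) := {x | (∀ j, x j ≠ 0) ∧ logAbs x ∈ M}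

namespace reinhardtDomain

variable {M : Set (ι → ℝ)} {m : ι → ℝ}

theorem ofLogPolar_mem (hm : m ∈ M) (u : ι → Circle) :
    (fun j => ofLogPolar (m j) (u j)) ∈ reinhardtDomain M := by
  refine ⟨fun j => ofLogPolar_ne_zero _ _, ?_⟩
  have : logAbs (fun j => ofLogPolar (m j) (u j)) = m := funext fun j => log_norm_ofLogPolar _ _
  rwa [this]

def toTorus : C(reinhardtDomain M, ι → Circle) where
  toFun x j := normalize (x.1 j) (x.2.1 j)
  continuous_toFun := continuous_pi fun j => by
    have hx : Continuous fun x : reinhardtDomain M => x.1 j :=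
      (continuous_apply j).comp continuous_subtype_val
    exact (hx.div (Complex.continuous_ofReal.comp hx.norm) fun x => by simpa using x.2.1 j
      ).subtype_mk _

def fromTorus (hm : m ∈ M) : C(ι → Circle, reinhardtDomain M) where
  toFun u := ⟨fun j => ofLogPolar (m j) (u j), ofLogPolar_mem hm u⟩
  continuous_toFun := by fun_prop

theorem toTorus_comp_fromTorus (hm : m ∈ M) :
    toTorus.comp (fromTorus hm) = ContinuousMap.id (ι → Circle) := by
  ext u j
  exact congrArg _ (normalize_ofLogPolar _ _)

theorem continuous_logAbs : Continuous fun x : reinhardtDomain M => logAbs x.1 :=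
  continuous_pi fun j =>
    ((continuous_apply j).comp continuous_subtype_val).norm.log fun x => by simpa using x.2.1 j

def retractionHomotopy (hM : Convex ℝ M) (hm : m ∈ M) :
    Homotopy ((fromTorus hm).comp toTorus) (ContinuousMap.id (reinhardtDomain M)) where
  toFun p :=
    ⟨fun j => ofLogPolar (((1 - (p.1 : ℝ)) • m + (p.1 : ℝ) • logAbs p.2.1) j) (toTorus p.2 j),
    ofLogPolar_mem (hM hm p.2.2.2 (sub_nonneg.2 p.1.2.2) p.1.2.1 (sub_add_cancel 1 _)) _⟩
  continuous_toFun := by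
    have hlog : Continuous fun p : I × reinhardtDomain M => logAbs p.2.1 :=
      continuous_logAbs.comp continuous_snd
    have hline : Continuous fun p : I × reinhardtDomain M =>
        (1 - (p.1 : ℝ)) • m + (p.1 : ℝ) • logAbs p.2.1 := by fun_prop
    refine Continuous.subtype_mk (continuous_pi fun j => ?_) _
    exact continuous_ofLogPolar.comp <| ((continuous_apply j).comp hline).prodMk
      ((continuous_apply j).comp (toTorus.continuous.comp continuous_snd))
  map_zero_left x := by simp [fromTorus]
  map_one_left x := by
    ext j
    simpa [logAbs, toTorus] using ofLogPolar_log_norm_normalize (x.2.1 j)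

def homotopyEquivTorus (hM : Convex ℝ M) (hm : m ∈ M) : reinhardtDomain M ≃ₕ (ι → Circle) where
  toFun := toTorus
  invFun := fromTorus hm
  left_inv := ⟨retractionHomotopy hM hm⟩
  right_inv := by rw [toTorus_comp_fromTorus]

end reinhardtDomain

end

theorem stmt13_general (n : ℕ) (M : Set (Fin n → ℝ)) (hMne : M.Nonempty)
    (hMconv : Convex ℝ M)
    (U : Set (Fin n → ℂ))
    (hU : U = {x | (∀ j, x j ≠ 0) ∧ (fun j => Real.log ‖x j‖) ∈ M}) :
    ∀ (x0 : U) (a b : FundamentalGroup U x0), a * b = b * a := by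
  subst hU
  obtain ⟨m, hm⟩ := hMne
  exact FundamentalGroup.mul_comm_of_homotopyEquiv (reinhardtDomain.homotopyEquivTorus hMconv hm)
    fun _ => FundamentalGroup.mul_comm_of_group (G := Fin n → Circle)

/-- The fundamental group of the Reinhardt domain `Log⁻¹(M)` over a nonempty convex open
set `M ⊆ ℝⁿ` is commutative. -/
theorem stmt13 (n : ℕ) (M : Set (Fin n → ℝ)) (hMne : M.Nonempty)
    (hMconv : Convex ℝ M) (hMopen : IsOpen M)
    (U : Set (Fin n → ℂ))
    (hU : U = {x | (∀ j, x j ≠ 0) ∧ (fun j => Real.log ‖x j‖) ∈ M}) :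
    ∀ (x0 : U) (a b : FundamentalGroup U x0), a * b = b * a :=
  stmt13_general n M hMne hMconv U hU
end

section
/- Let n ≥ 1 and p ≥ 1 be integers. For s ∈ ℕ^n put σ(s) = s_2 + ⋯ + s_n and c(s) = ((s_1 + p·(σ(s)+1) − 1)!·σ(s)!) / (s_1!·s_2!⋯s_n!·(p·(σ(s)+1) − 1)!). Then there is a neighborhood W of 0 in ℂ^n such that for every x ∈ W the series ∑_{s∈ℕ^n} c(s)·x^s converges absolutely, (1−x_1)^p − x_2 − ⋯ − x_n ≠ 0, and ∑_{s∈ℕ^n} c(s)·x^s = ((1−x_1)^p − x_2 − ⋯ − x_n)^{−1}. -/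
/-!
Summing first over `s₀`, the negative binomial series `∑ₖ C(k + r, r) zᵏ = (1 - z)^-(r+1)` with
`r + 1 = p (|t| + 1)` turns the series into `∑ₜ multinomial(t) x'ᵗ ((1 - x₀)^p)^-(|t|+1)`, where
`t = (s₂, …, sₙ)`. Grouping the `t` with `|t| = m`, the multinomial theorem leaves the geometric
series `∑ₘ (x₂ + ⋯ + xₙ)ᵐ ((1 - x₀)^p)^-(m+1) = ((1 - x₀)^p - x₂ - ⋯ - xₙ)⁻¹`. Absolute
convergence on `{|x₀| < 1, |x₂| + ⋯ + |xₙ| < (1 - |x₀|)^p}` comes from the same computation at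
the point `(|xᵢ|)`, where all terms are nonnegative and the iterated sums control the total.
-/

open Finset

section Reindexing

variable {ι α : Type*} [Fintype ι] [DecidableEq ι]

def Finset.piAntidiagSigmaEquiv (ι : Type*) [Fintype ι] [DecidableEq ι] :
    (Σ m : ℕ, piAntidiag (univ : Finset ι) m) ≃ (ι → ℕ) where
  toFun t := t.2
  invFun t := ⟨∑ i, t i, t, by simp⟩
  left_inv := by
    rintro ⟨m, t, ht⟩
    obtain ⟨rfl, -⟩ := mem_piAntidiag.1 ht
    rfl
  right_inv _ := rfl

theorem HasSum.sum_piAntidiag [AddCommMonoid α] [TopologicalSpace α] [ContinuousAdd α]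
    [RegularSpace α] {g : (ι → ℕ) → α} {a : α} (hg : HasSum g a) :
    HasSum (fun m ↦ ∑ t ∈ piAntidiag univ m, g t) a :=
  ((piAntidiagSigmaEquiv ι).hasSum_iff.2 hg).sigma fun m ↦
    (piAntidiag univ m).sum_coe_sort g ▸ hasSum_fintype _

theorem summable_of_summable_sum_piAntidiag_of_nonneg {g : (ι → ℕ) → ℝ} (hg : 0 ≤ g)
    (h : Summable fun m ↦ ∑ t ∈ piAntidiag univ m, g t) : Summable g := by
  rw [← (piAntidiagSigmaEquiv ι).summable_iff]
  refine (summable_sigma_of_nonneg fun _ ↦ hg _).2 ⟨fun _ ↦ .of_finite, h.congr fun m ↦ ?_⟩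
  rw [tsum_fintype]
  exact ((piAntidiag univ m).sum_coe_sort g).symm

end Reindexing

section FinCons

variable {n : ℕ} {β α : Type*}

def Fin.consProdEquiv (n : ℕ) (β : Type*) : (Fin n → β) × β ≃ (Fin (n + 1) → β) :=
  (Equiv.prodComm _ _).trans (Fin.consEquiv fun _ ↦ β)

theorem HasSum.fin_cons_fiberwise [AddCommMonoid α] [TopologicalSpace α] [ContinuousAdd α]
    [RegularSpace α] {f : (Fin (n + 1) → β) → α} {g : (Fin n → β) → α} {a : α} (hf : HasSum f a)
    (hg : ∀ t, HasSum (fun k ↦ f (Fin.cons k t)) (g t)) : HasSum g a :=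
  ((Fin.consProdEquiv n β).hasSum_iff.2 hf).prod_fiberwise hg

theorem summable_of_fin_cons_fiberwise_of_nonneg {f : (Fin (n + 1) → β) → ℝ}
    {g : (Fin n → β) → ℝ} (hf : 0 ≤ f) (hg : ∀ t, HasSum (fun k ↦ f (Fin.cons k t)) (g t))
    (hgs : Summable g) : Summable f := by
  rw [← (Fin.consProdEquiv n β).summable_iff]
  exact (summable_prod_of_nonneg fun _ ↦ hf _).2
    ⟨fun t ↦ (hg t).summable, hgs.congr fun t ↦ (hg t).tsum_eq.symm⟩

end FinCons

theorem sum_piAntidiag_multinomial_mul_prod_pow_mul_pow {ι R : Type*} [Fintype ι]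
    [DecidableEq ι] [CommSemiring R] (y : ι → R) (C : R) (m : ℕ) :
    ∑ t ∈ piAntidiag univ m,
        (Nat.multinomial univ t : R) * (∏ i, y i ^ t i) * C ^ (∑ i, t i + 1)
      = ((∑ i, y i) * C) ^ m * C := by
  rw [mul_pow, sum_pow_eq_sum_piAntidiag, sum_mul, sum_mul]
  refine sum_congr rfl fun t ht ↦ ?_
  rw [(mem_piAntidiag.1 ht).1, pow_succ]
  ring

namespace Hypergeometric

variable {p n : ℕ}

def coeff (p n : ℕ) (s : Fin (n + 1) → ℕ) : ℕ :=
  (s 0 + (p * (∑ i : Fin n, s i.succ + 1) - 1)).choose (p * (∑ i : Fin n, s i.succ + 1) - 1) *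
    Nat.multinomial univ fun i : Fin n ↦ s i.succ

theorem factorial_mul_factorial_eq_coeff_mul (hp : 1 ≤ p) (s : Fin (n + 1) → ℕ) :
    (s 0 + p * (∑ i : Fin n, s i.succ + 1) - 1).factorial * (∑ i : Fin n, s i.succ).factorial
      = coeff p n s *
        ((∏ i, (s i).factorial) * (p * (∑ i : Fin n, s i.succ + 1) - 1).factorial) := by
  have hq : 1 ≤ p * (∑ i : Fin n, s i.succ + 1) := Nat.one_le_iff_ne_zero.2 (by positivity)
  rw [Nat.add_sub_assoc hq, ← Nat.add_choose_mul_factorial_mul_factorial,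
    ← Nat.multinomial_spec, coeff, Fin.prod_univ_succ]
  ring

theorem cast_factorial_div_eq_coeff {K : Type*} [Field K] [CharZero K] (hp : 1 ≤ p)
    (s : Fin (n + 1) → ℕ) :
    (((s 0 + p * (∑ i : Fin n, s i.succ + 1) - 1).factorial *
        (∑ i : Fin n, s i.succ).factorial : ℕ) : K) /
      (((∏ i, (s i).factorial) * (p * (∑ i : Fin n, s i.succ + 1) - 1).factorial : ℕ) : K)
      = coeff p n s := by
  rw [factorial_mul_factorial_eq_coeff_mul hp, Nat.cast_mul, mul_div_cancel_right₀]
  exact Nat.cast_ne_zero.2 (by positivity)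

variable {𝕜 : Type*} [RCLike 𝕜]

theorem hasSum_coeff_cons_mul_prod_pow (hp : 1 ≤ p) {x : Fin (n + 1) → 𝕜} (hx : ‖x 0‖ < 1)
    (t : Fin n → ℕ) :
    HasSum
      (fun k ↦ (coeff p n (Fin.cons k t) : 𝕜) * ∏ i, x i ^ (Fin.cons k t : Fin (n + 1) → ℕ) i)
      ((Nat.multinomial univ t : 𝕜) * (∏ i, x i.succ ^ t i) *
        ((1 - x 0) ^ p)⁻¹ ^ (∑ i, t i + 1)) := by
  have hq : p * (∑ i, t i + 1) - 1 + 1 = p * (∑ i, t i + 1) :=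
    Nat.sub_add_cancel (Nat.one_le_iff_ne_zero.2 (by positivity))
  have H := (hasSum_choose_mul_geometric_of_norm_lt_one (p * (∑ i, t i + 1) - 1) hx).mul_left
    ((Nat.multinomial univ t : 𝕜) * ∏ i, x i.succ ^ t i)
  rw [hq, pow_mul, one_div, ← inv_pow] at H
  refine H.congr_fun fun k ↦ ?_
  simp only [coeff, Fin.prod_univ_succ, Fin.cons_zero, Fin.cons_succ, Nat.cast_mul]
  ring

theorem summable_coeff_mul_prod_pow_of_nonneg (hp : 1 ≤ p) {x : Fin (n + 1) → ℝ} (h0 : 0 ≤ x)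
    (hx : x 0 < 1) (hY : ∑ i : Fin n, x i.succ < (1 - x 0) ^ p) :
    Summable fun s : Fin (n + 1) → ℕ ↦ (coeff p n s : ℝ) * ∏ i, x i ^ s i := by
  have hpow : 0 < (1 - x 0) ^ p := pow_pos (by linarith) p
  have hYC : (∑ i : Fin n, x i.succ) * ((1 - x 0) ^ p)⁻¹ < 1 := by
    rwa [← div_eq_mul_inv, div_lt_one hpow]
  refine summable_of_fin_cons_fiberwise_of_nonneg
    (fun s ↦ mul_nonneg (Nat.cast_nonneg _) (prod_nonneg fun i _ ↦ pow_nonneg (h0 i) _))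
    (hasSum_coeff_cons_mul_prod_pow hp (by rwa [Real.norm_of_nonneg (h0 0)]))
    (summable_of_summable_sum_piAntidiag_of_nonneg
      (fun t ↦ mul_nonneg (mul_nonneg (Nat.cast_nonneg _)
        (prod_nonneg fun i _ ↦ pow_nonneg (h0 i.succ) _)) (by positivity)) ?_)
  simp only [sum_piAntidiag_multinomial_mul_prod_pow_mul_pow]
  exact (summable_geometric_of_lt_one
    (mul_nonneg (sum_nonneg fun i _ ↦ h0 i.succ) (by positivity)) hYC).mul_right _

variable {x : Fin (n + 1) → 𝕜}

theorem norm_sum_lt_norm_one_sub_pow (hx : ‖x 0‖ < 1)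
    (hY : ∑ i : Fin n, ‖x i.succ‖ < (1 - ‖x 0‖) ^ p) :
    ‖∑ i : Fin n, x i.succ‖ < ‖(1 - x 0) ^ p‖ :=
  calc ‖∑ i : Fin n, x i.succ‖ ≤ ∑ i : Fin n, ‖x i.succ‖ := norm_sum_le _ _
    _ < (1 - ‖x 0‖) ^ p := hY
    _ ≤ ‖(1 - x 0) ^ p‖ := by
      rw [norm_pow]
      refine pow_le_pow_left₀ (by linarith) ?_ p
      simpa using norm_sub_norm_le (1 : 𝕜) (x 0)

theorem one_sub_pow_sub_sum_ne_zero (hx : ‖x 0‖ < 1)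
    (hY : ∑ i : Fin n, ‖x i.succ‖ < (1 - ‖x 0‖) ^ p) :
    (1 - x 0) ^ p - ∑ i : Fin n, x i.succ ≠ 0 :=
  sub_ne_zero.2 fun h ↦ (norm_sum_lt_norm_one_sub_pow hx hY).ne' (by rw [h])

theorem summable_norm_coeff_mul_prod_pow (hp : 1 ≤ p) (hx : ‖x 0‖ < 1)
    (hY : ∑ i : Fin n, ‖x i.succ‖ < (1 - ‖x 0‖) ^ p) :
    Summable fun s : Fin (n + 1) → ℕ ↦ ‖(coeff p n s : 𝕜) * ∏ i, x i ^ s i‖ := by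
  simpa [norm_prod] using summable_coeff_mul_prod_pow_of_nonneg hp (x := fun i ↦ ‖x i‖)
    (fun i ↦ norm_nonneg _) hx hY

theorem hasSum_coeff_mul_prod_pow (hp : 1 ≤ p) (hx : ‖x 0‖ < 1)
    (hY : ∑ i : Fin n, ‖x i.succ‖ < (1 - ‖x 0‖) ^ p) :
    HasSum (fun s : Fin (n + 1) → ℕ ↦ (coeff p n s : 𝕜) * ∏ i, x i ^ s i)
      ((1 - x 0) ^ p - ∑ i : Fin n, x i.succ)⁻¹ := by
  have hsum := (summable_norm_coeff_mul_prod_pow hp hx hY).of_norm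
  have hu : (1 - x 0) ^ p ≠ 0 := fun h ↦ by
    simpa [h] using (norm_nonneg _).trans_lt (norm_sum_lt_norm_one_sub_pow hx hY)
  set Y := ∑ i : Fin n, x i.succ
  set C := ((1 - x 0) ^ p)⁻¹
  have hYC : ‖Y * C‖ < 1 := by
    rw [norm_mul, norm_inv, ← div_eq_mul_inv, div_lt_one (norm_pos_iff.2 hu)]
    exact norm_sum_lt_norm_one_sub_pow hx hY
  have hiter :=
    (hsum.hasSum.fin_cons_fiberwise (hasSum_coeff_cons_mul_prod_pow hp hx)).sum_piAntidiag
  simp only [sum_piAntidiag_multinomial_mul_prod_pow_mul_pow] at hiter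
  have hval : (1 - Y * C)⁻¹ * C = ((1 - x 0) ^ p - Y)⁻¹ := by
    have hne := one_sub_pow_sub_sum_ne_zero hx hY
    rw [show 1 - Y * C = ((1 - x 0) ^ p - Y) * C by simp only [C]; field_simp, mul_inv,
      inv_mul_cancel_right₀ (inv_ne_zero hu)]
  rw [← hval, ← hiter.unique ((hasSum_geometric_of_norm_lt_one hYC).mul_right C)]
  exact hsum.hasSum

end Hypergeometric

open Hypergeometric in
/-- The hypergeometric series with the indicated coefficients sums, near the origin, to
the rational function `((1 − x₁)^p − x₂ − ⋯ − x_n)⁻¹`. -/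
theorem stmt15 (n : ℕ) (p : ℕ) (hp : 1 ≤ p)
    (σ : (Fin (n + 1) → ℕ) → ℕ) (hσ : ∀ s, σ s = ∑ i : Fin n, s i.succ)
    (c : (Fin (n + 1) → ℕ) → ℂ)
    (hc : ∀ s, c s =
      (((s 0 + p * (σ s + 1) - 1).factorial * (σ s).factorial : ℕ) : ℂ) /
      ((((∏ i, (s i).factorial) * (p * (σ s + 1) - 1).factorial : ℕ) : ℂ))) :
    ∃ W : Set (Fin (n + 1) → ℂ), IsOpen W ∧ (0 : Fin (n + 1) → ℂ) ∈ W ∧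
      ∀ x ∈ W,
        Summable (fun s : Fin (n + 1) → ℕ => ‖c s * ∏ i, x i ^ s i‖) ∧
        (1 - x 0) ^ p - (∑ i : Fin n, x i.succ) ≠ 0 ∧
        HasSum (fun s : Fin (n + 1) → ℕ => c s * ∏ i, x i ^ s i)
          ((1 - x 0) ^ p - ∑ i : Fin n, x i.succ)⁻¹ := by
  refine ⟨{x | ‖x 0‖ < 1 ∧ ∑ i : Fin n, ‖x i.succ‖ < (1 - ‖x 0‖) ^ p}, ?_, by simp, ?_⟩
  · have hx0 : Continuous fun x : Fin (n + 1) → ℂ ↦ ‖x 0‖ := (continuous_apply 0).norm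
    exact (isOpen_lt hx0 continuous_const).inter (isOpen_lt
      (continuous_finsetSum _ fun i _ ↦ (continuous_apply i.succ).norm)
      ((continuous_const.sub hx0).pow p))
  · rintro x ⟨hx, hY⟩
    obtain rfl : c = fun s ↦ (coeff p n s : ℂ) :=
      funext fun s ↦ by rw [hc, hσ, cast_factorial_div_eq_coeff hp]
    exact ⟨summable_norm_coeff_mul_prod_pow hp hx hY, one_sub_pow_sub_sum_ne_zero hx hY,
      hasSum_coeff_mul_prod_pow hp hx hY⟩
end

section
/- Let g(x_1,x_2) = 1 − 2x_1 − 3x_2 + x_1² − 6x_1x_2 + 3x_2² − x_2³. Then the complement ℝ² ∖ A_g of the amoeba of g has exactly 3 connected components. -/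
/-!
Writing `x₂ = s²`, the polynomial factors as `(x₁ - (1 + s)³)(x₁ - (1 - s)³)`, so its zero set in
the torus is parametrised by `s ↦ ((1 + s)³, s²)` with `s ∉ {0, -1}`. Hence `p` lies in the
amoeba iff `1`, `e^{p₂/2} = |s|` and `e^{p₁/3} = |1 + s|` are the side lengths of a triangle with
vertices `0, 1, 1 + s`, i.e. iff each of these three numbers is at most the sum of the other two.
The complement is therefore the disjoint union of the three open regions where one of them
exceeds the sum of the other two. After dividing by the long side, each region is a strict
sublevel set of a sum of exponentials of linear forms, hence convex and in particular connected.
-/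

open Real Function

section Partition

variable {X ι : Type*} [TopologicalSpace X] {S : Set X} {V : ι → Set X}

noncomputable def connectedComponentsEquivOfIsOpenPartition (hopen : ∀ i, IsOpen (V i))
    (hdisj : Pairwise (Disjoint on V)) (hunion : ⋃ i, V i = S)
    (hconn : ∀ i, IsConnected (V i)) :
    ConnectedComponents S ≃ ι := by
  have hmem (x : S) : ∃ i, ↑x ∈ V i := Set.mem_iUnion.1 (hunion ▸ x.2)
  refine ConnectedComponents.equivOfIsClopenOfIsConnected (U := fun i => ((↑) : S → X) ⁻¹' V i)
    (fun i => ⟨?_, (hopen i).preimage continuous_subtype_val⟩)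
    (fun i j hij => (hdisj hij).preimage _) (Set.iUnion_eq_univ_iff.2 hmem) fun i => ?_
  · have hcompl : ((↑) ⁻¹' V i : Set S)ᶜ = ⋃ (j) (_ : j ≠ i), (↑) ⁻¹' V j := by
      ext x
      simp only [Set.mem_compl_iff, Set.mem_preimage, Set.mem_iUnion, exists_prop]
      obtain ⟨k, hk⟩ := hmem x
      exact ⟨fun hi => ⟨k, fun h => hi (h ▸ hk), hk⟩,
        fun ⟨j, hji, hj⟩ hi => Set.disjoint_left.1 (hdisj hji) hj hi⟩
    rw [← isOpen_compl_iff, hcompl]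
    exact isOpen_biUnion fun j _ => (hopen j).preimage continuous_subtype_val
  · have hsub : V i ⊆ S := hunion ▸ Set.subset_iUnion V i
    have himage : (↑) '' ((↑) ⁻¹' V i : Set S) = V i := by
      rw [Subtype.image_preimage_coe, Set.inter_eq_right.2 hsub]
    obtain ⟨x, hx⟩ := (hconn i).1
    exact ⟨⟨⟨x, hsub hx⟩, hx⟩,
      Topology.IsInducing.subtypeVal.isPreconnected_image.1 (by rw [himage]; exact (hconn i).2)⟩

end Partition

theorem convexOn_finset_sum {ι E : Type*} [AddCommGroup E] [Module ℝ E] {C : Set E}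
    (hC : Convex ℝ C) (s : Finset ι) {f : ι → E → ℝ} (hf : ∀ i ∈ s, ConvexOn ℝ C (f i)) :
    ConvexOn ℝ C (fun x => ∑ i ∈ s, f i x) := by
  classical
  induction s using Finset.induction_on with
  | empty => simpa using convexOn_const (0 : ℝ) hC
  | insert j s hj ih =>
    simp only [Finset.sum_insert hj]
    exact (hf j (s.mem_insert_self j)).add (ih fun i hi => hf i (Finset.mem_insert_of_mem hi))

section LongSide

variable {ι : Type*} [Fintype ι]

theorem convex_setOf_sum_exp_lt_two_mul_exp {E : Type*} [AddCommGroup E] [Module ℝ E]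
    (ℓ : ι → E →ₗ[ℝ] ℝ) (i : ι) :
    Convex ℝ {p | ∑ j, exp (ℓ j p) < 2 * exp (ℓ i p)} := by
  have hconv : ConvexOn ℝ Set.univ fun p => ∑ j, exp ((ℓ j - ℓ i) p) :=
    convexOn_finset_sum convex_univ _ fun j _ => by
      have h := convexOn_exp.comp_linearMap (ℓ j - ℓ i)
      rwa [Set.preimage_univ] at h
  convert hconv.convex_lt 2 using 1
  ext p
  simp only [LinearMap.sub_apply, exp_sub, ← Finset.sum_div, Set.mem_univ, true_and,
    Set.mem_ofPred_eq, div_lt_iff₀ (exp_pos _)]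

theorem not_sum_lt_two_mul_of_ne [DecidableEq ι] {t : ι → ℝ} (ht : ∀ j, 0 ≤ t j) {i k : ι}
    (hik : i ≠ k) (hi : ∑ j, t j < 2 * t i) : ¬ ∑ j, t j < 2 * t k := by
  have : t i + t k ≤ ∑ j, t j := by
    rw [← Finset.sum_pair hik]
    exact Finset.sum_le_univ_sum_of_nonneg ht
  intro hk
  linarith

end LongSide

theorem exists_norm_eq_and_norm_one_add_eq_iff {r w : ℝ} (hr : 0 ≤ r) :
    (∃ s : ℂ, ‖s‖ = r ∧ ‖1 + s‖ = w) ↔ 1 ≤ r + w ∧ r ≤ 1 + w ∧ w ≤ 1 + r := by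
  constructor
  · rintro ⟨s, rfl, rfl⟩
    refine ⟨?_, ?_, norm_add_le 1 s |>.trans_eq (by simp)⟩
    · simpa [add_comm] using norm_sub_le (1 + s) s
    · simpa [add_comm] using norm_sub_le (1 + s) 1
  · rintro ⟨h₁, h₂, h₃⟩
    let f : ℝ → ℝ := fun θ => ‖1 + r * Complex.exp (θ * Complex.I)‖
    have hf : ContinuousOn f (Set.Icc 0 π) := by fun_prop
    have hw : w ∈ Set.Icc (f π) (f 0) := by
      have hπ : (1 : ℂ) + r * Complex.exp (π * Complex.I) = (1 - r : ℝ) := by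
        rw [Complex.exp_pi_mul_I]; push_cast; ring
      have h0 : (1 : ℂ) + r * Complex.exp ((0 : ℝ) * Complex.I) = (1 + r : ℝ) := by simp
      simp only [f, hπ, h0, Complex.norm_real, Real.norm_eq_abs,
        abs_of_nonneg (by linarith : 0 ≤ 1 + r)]
      exact ⟨abs_le.2 ⟨by linarith, by linarith⟩, h₃⟩
    obtain ⟨θ, -, hθ⟩ := intermediate_value_Icc' pi_pos.le hf hw
    exact ⟨r * Complex.exp (θ * Complex.I), by simp [hr], hθ⟩

def amoeba {n : ℕ} (f : (Fin n → ℂ) → ℂ) : Set (Fin n → ℝ) :=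
  {v | ∃ x : Fin n → ℂ, (∀ i, x i ≠ 0) ∧ f x = 0 ∧ ∀ i, v i = Real.log ‖x i‖}

def g₃₂ (x : Fin 2 → ℂ) : ℂ :=
  1 - 2 * x 0 - 3 * x 1 + x 0 ^ 2 - 6 * x 0 * x 1 + 3 * x 1 ^ 2 - x 1 ^ 3

theorem g₃₂_eq_zero_iff {x : Fin 2 → ℂ} : g₃₂ x = 0 ↔ ∃ s : ℂ, x = ![(1 + s) ^ 3, s ^ 2] := by
  constructor
  · intro hx
    obtain ⟨s, hs⟩ := IsAlgClosed.exists_pow_nat_eq (x 1) two_pos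
    have hfactor : (x 0 - (1 + s) ^ 3) * (x 0 - (1 - s) ^ 3) = 0 := by
      rw [← hx, g₃₂, ← hs]; ring
    rcases mul_eq_zero.1 hfactor with h | h
    · exact ⟨s, by ext i; fin_cases i <;> simp [← hs, sub_eq_zero.1 h]⟩
    · exact ⟨-s, by ext i; fin_cases i <;> simp [← hs, sub_eq_zero.1 h, sub_eq_add_neg]⟩
  · rintro ⟨s, rfl⟩
    simp [g₃₂]; ring

theorem mem_amoeba_g₃₂_iff {p : Fin 2 → ℝ} :
    p ∈ amoeba g₃₂ ↔ ∃ s : ℂ, ‖s‖ = exp (p 1 / 2) ∧ ‖1 + s‖ = exp (p 0 / 3) := by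
  constructor
  · rintro ⟨x, hx0, hgx, hp⟩
    obtain ⟨s, rfl⟩ := g₃₂_eq_zero_iff.1 hgx
    have hs : 0 < ‖s‖ := by simpa using hx0 1
    have h1s : 0 < ‖1 + s‖ := by simpa using hx0 0
    refine ⟨s, ?_, ?_⟩
    · rw [hp 1]; simp [log_pow, exp_log hs]
    · rw [hp 0]; simp [log_pow, exp_log h1s]
  · rintro ⟨s, hs, h1s⟩
    refine ⟨![(1 + s) ^ 3, s ^ 2], ?_, g₃₂_eq_zero_iff.2 ⟨s, rfl⟩, ?_⟩
    · intro i; fin_cases i <;> simp [← norm_pos_iff, hs, h1s, exp_pos]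
    · intro i; fin_cases i <;> simp [hs, h1s] <;> ring

/-- At `p = Log ((1 + s)³, s²)` the numbers `exp (sideLog i p)` are the side lengths
`1, ‖s‖, ‖1 + s‖` of the triangle with vertices `0, 1, 1 + s`. -/
noncomputable def sideLog : Fin 3 → (Fin 2 → ℝ) →ₗ[ℝ] ℝ :=
  ![0, (2⁻¹ : ℝ) • LinearMap.proj 1, (3⁻¹ : ℝ) • LinearMap.proj 0]

@[simp] theorem sideLog_zero (p : Fin 2 → ℝ) : sideLog 0 p = 0 := rfl

@[simp] theorem sideLog_one (p : Fin 2 → ℝ) : sideLog 1 p = p 1 / 2 := by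
  simp [sideLog, div_eq_inv_mul]

@[simp] theorem sideLog_two (p : Fin 2 → ℝ) : sideLog 2 p = p 0 / 3 := by
  simp [sideLog, div_eq_inv_mul]

def longSideRegion (i : Fin 3) : Set (Fin 2 → ℝ) :=
  {p | ∑ j, exp (sideLog j p) < 2 * exp (sideLog i p)}

theorem mem_amoeba_g₃₂_iff_forall {p : Fin 2 → ℝ} :
    p ∈ amoeba g₃₂ ↔ ∀ i, 2 * exp (sideLog i p) ≤ ∑ j, exp (sideLog j p) := by
  rw [mem_amoeba_g₃₂_iff, exists_norm_eq_and_norm_one_add_eq_iff (exp_pos _).le]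
  simp only [Fin.forall_fin_succ, Fin.succ_zero_eq_one, Fin.succ_one_eq_two, Fin.sum_univ_three,
    sideLog_zero, sideLog_one, sideLog_two, exp_zero, IsEmpty.forall_iff, and_true]
  constructor <;> rintro ⟨h₁, h₂, h₃⟩ <;> exact ⟨by linarith, by linarith, by linarith⟩

theorem compl_amoeba_g₃₂ : (amoeba g₃₂)ᶜ = ⋃ i, longSideRegion i := by
  ext p
  simp [mem_amoeba_g₃₂_iff_forall, longSideRegion]

theorem isOpen_longSideRegion (i : Fin 3) : IsOpen (longSideRegion i) :=
  isOpen_lt (by fun_prop) (by fun_prop)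

theorem pairwise_disjoint_longSideRegion : Pairwise (Disjoint on longSideRegion) :=
  fun _ _ hik => Set.disjoint_left.2 fun _ hi =>
    not_sum_lt_two_mul_of_ne (fun _ => (exp_pos _).le) hik hi

theorem isConnected_longSideRegion (i : Fin 3) : IsConnected (longSideRegion i) := by
  refine ⟨?_, (convex_setOf_sum_exp_lt_two_mul_exp sideLog i).isPreconnected⟩
  have he : 2 < exp 1 := by linarith [exp_one_gt_d9]
  have he' : exp (-1) < 1 / 2 := by
    rw [exp_neg, inv_lt_comm₀ (exp_pos 1) (by norm_num)]; linarith
  match i with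
  | 0 => exact ⟨![-3, -2], by norm_num [longSideRegion, Fin.sum_univ_three]; linarith⟩
  | 1 => exact ⟨![-3, 2], by norm_num [longSideRegion, Fin.sum_univ_three]; linarith⟩
  | 2 => exact ⟨![3, -2], by norm_num [longSideRegion, Fin.sum_univ_three]; linarith⟩

/-- The complement of the amoeba of
`g = 1 − 2x₁ − 3x₂ + x₁² − 6x₁x₂ + 3x₂² − x₂³` has exactly 3 connected components. -/
theorem stmt17 (g : (Fin 2 → ℂ) → ℂ)
    (hg : ∀ x : Fin 2 → ℂ, g x =
      1 - 2 * x 0 - 3 * x 1 + (x 0) ^ 2 - 6 * x 0 * x 1 + 3 * (x 1) ^ 2 - (x 1) ^ 3)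
    (Ag : Set (Fin 2 → ℝ))
    (hAg : Ag = {v | ∃ x : Fin 2 → ℂ, (∀ i, x i ≠ 0) ∧ g x = 0 ∧
      ∀ i, v i = Real.log ‖x i‖}) :
    Nat.card (ConnectedComponents {v : Fin 2 → ℝ // v ∉ Ag}) = 3 := by
  obtain rfl : g = g₃₂ := funext hg
  obtain rfl : Ag = amoeba g₃₂ := hAg
  have e := connectedComponentsEquivOfIsOpenPartition isOpen_longSideRegion
    pairwise_disjoint_longSideRegion compl_amoeba_g₃₂.symm isConnected_longSideRegion
  exact (Nat.card_congr e).trans (Nat.card_fin 3)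
end
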